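/- arXiv:2109.12039 — 10 statements merged into one kernel-verified Lean document; each statement's English description precedes it below -/
import Mathlib

section
/- Let 𝔾₁ = (X₁, A₁, λ₁) and 𝔾₂ = (X₂, A₂, λ₂) be synchronous games. Then the product game 𝔾₁ × 𝔾₂ has a perfect algebraic strategy if and only if both 𝔾₁ and 𝔾₂ have perfect algebraic strategies. -/
/-- The rule function of the product of two (synchronous) games:
`(λ₁ × λ₂)((x₁,x₂),(y₁,y₂),(a₁,a₂),(b₁,b₂)) = λ₁(x₁,y₁,a₁,b₁) · λ₂(x₂,y₂,a₂,b₂)`. -/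
def prodRule {X₁ X₂ A₁ A₂ : Type}
    (lam₁ : X₁ → X₁ → A₁ → A₁ → Bool) (lam₂ : X₂ → X₂ → A₂ → A₂ → Bool)
    (x y : X₁ × X₂) (a b : A₁ × A₂) : Bool :=
  lam₁ x.1 y.1 a.1 b.1 && lam₂ x.2 y.2 a.2 b.2

/-- A synchronous game with rule function `lam` has a perfect algebraic strategy if there is a
nonzero unital complex *-algebra with self-adjoint idempotents `e x a` summing to `1` over `a`
for each `x`, and `e x a * e y b = 0` whenever `lam x y a b = 0`. -/
def PerfectAlgebraicStrategy {X A : Type} [Fintype A] (lam : X → X → A → A → Bool) : Prop :=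
  ∃ (𝒜 : Type) (_ : Ring 𝒜) (_ : Algebra ℂ 𝒜) (_ : StarRing 𝒜) (_ : StarModule ℂ 𝒜)
    (_ : Nontrivial 𝒜) (e : X → A → 𝒜),
    (∀ x a, star (e x a) = e x a) ∧
    (∀ x a, e x a * e x a = e x a) ∧
    (∀ x, ∑ a, e x a = 1) ∧
    (∀ x y a b, lam x y a b = false → e x a * e y b = 0)

open TensorProduct

section StarTensor

variable (A B : Type) [Ring A] [Algebra ℂ A] [StarRing A] [StarModule ℂ A]
  [Ring B] [Algebra ℂ B] [StarRing B] [StarModule ℂ B]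

/-- The star operation on a tensor product of complex star algebras, as an additive map. -/
noncomputable def tstar : A ⊗[ℂ] B →+ A ⊗[ℂ] B :=
  TensorProduct.liftAddHom
    (AddMonoidHom.mk' (fun a => AddMonoidHom.mk' (fun b => star a ⊗ₜ[ℂ] star b)
        (fun b c => by simp [star_add, TensorProduct.tmul_add]))
      (fun a b => by
        ext c
        simp [star_add, TensorProduct.add_tmul]))
    (fun c a b => by
      simp only [AddMonoidHom.mk'_apply, star_smul]
      rw [TensorProduct.smul_tmul])

variable {A B}

lemma tstar_tmul (a : A) (b : B) : tstar A B (a ⊗ₜ[ℂ] b) = star a ⊗ₜ[ℂ] star b :=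
  TensorProduct.liftAddHom_tmul _ _ _ _

noncomputable instance tensorStarRing : StarRing (A ⊗[ℂ] B) where
  star := tstar A B
  star_involutive x := by
    induction x with
    | zero => simp [map_zero]
    | tmul a b => show tstar A B (tstar A B _) = _; simp [tstar_tmul]
    | add x y hx hy =>
      show tstar A B (tstar A B (x + y)) = x + y
      rw [map_add, map_add]; exact congrArg₂ (· + ·) hx hy
  star_add x y := map_add _ x y
  star_mul x y := by
    show tstar A B (x * y) = tstar A B y * tstar A B x
    induction x with
    | zero => simp
    | tmul a b =>
      induction y with
      | zero => simp
      | tmul c d =>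
        rw [Algebra.TensorProduct.tmul_mul_tmul, tstar_tmul, tstar_tmul, tstar_tmul,
          Algebra.TensorProduct.tmul_mul_tmul, star_mul, star_mul]
      | add y z hy hz => rw [mul_add, map_add, map_add, add_mul, hy, hz]
    | add x w hx hw => rw [add_mul, map_add, map_add, mul_add, hx, hw]

lemma star_tmul' (a : A) (b : B) :
    star (a ⊗ₜ[ℂ] b) = star a ⊗ₜ[ℂ] star b :=
  tstar_tmul a b

noncomputable instance tensorStarModule : StarModule ℂ (A ⊗[ℂ] B) where
  star_smul c x := by
    show tstar A B (c • x) = star c • tstar A B x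
    induction x with
    | zero => simp
    | tmul a b =>
      rw [TensorProduct.smul_tmul', tstar_tmul, tstar_tmul, star_smul,
        TensorProduct.smul_tmul']
    | add x y hx hy => rw [smul_add, map_add, map_add, smul_add, hx, hy]

instance tensorNontrivial [Nontrivial A] [Nontrivial B] : Nontrivial (A ⊗[ℂ] B) := by
  obtain ⟨f, hf⟩ : ∃ f : Module.Dual ℂ A, f 1 ≠ 0 := by
    by_contra h; push_neg at h
    exact one_ne_zero ((Module.forall_dual_apply_eq_zero_iff ℂ (1 : A)).mp h)
  obtain ⟨g, hg⟩ : ∃ g : Module.Dual ℂ B, g 1 ≠ 0 := by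
    by_contra h; push_neg at h
    exact one_ne_zero ((Module.forall_dual_apply_eq_zero_iff ℂ (1 : B)).mp h)
  refine nontrivial_of_ne (1 : A ⊗[ℂ] B) 0 (fun h => ?_)
  have := congrArg (TensorProduct.lid ℂ ℂ ∘ TensorProduct.map f g) h
  rw [Algebra.TensorProduct.one_def] at this
  simp [TensorProduct.map_tmul] at this
  exact hf (this.resolve_right hg)

end StarTensor

/-- The product of two synchronous games has a perfect algebraic strategy if and only if
both factor games do. -/
theorem prod_perfectAlgebraicStrategy_iff
    {X₁ A₁ X₂ A₂ : Type} [Fintype X₁] [Nonempty X₁] [Fintype A₁] [Nonempty A₁]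
    [Fintype X₂] [Nonempty X₂] [Fintype A₂] [Nonempty A₂]
    (lam₁ : X₁ → X₁ → A₁ → A₁ → Bool) (lam₂ : X₂ → X₂ → A₂ → A₂ → Bool)
    (hsync₁ : ∀ x a b, a ≠ b → lam₁ x x a b = false)
    (hsync₂ : ∀ x a b, a ≠ b → lam₂ x x a b = false) :
    PerfectAlgebraicStrategy (prodRule lam₁ lam₂) ↔
      PerfectAlgebraicStrategy lam₁ ∧ PerfectAlgebraicStrategy lam₂ := by
  classical
  constructor
  · rintro ⟨𝒜, _, _, _, _, _, e, hst, hid, hsum, hz⟩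
    have hlam : ∀ (x y : X₁ × X₂) (a b : A₁ × A₂),
        prodRule lam₁ lam₂ x y a b = (lam₁ x.1 y.1 a.1 b.1 && lam₂ x.2 y.2 a.2 b.2) :=
      fun _ _ _ _ => rfl
    constructor
    · set x₂ : X₂ := Classical.arbitrary X₂
      refine ⟨𝒜, ‹_›, ‹_›, ‹_›, ‹_›, ‹_›, fun x a => ∑ a₂, e (x, x₂) (a, a₂), ?_, ?_, ?_, ?_⟩
      · intro x a; simp [star_sum, hst]
      · intro x a
        rw [Finset.sum_mul_sum]
        refine Finset.sum_congr rfl fun a₂ _ => ?_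
        rw [Finset.sum_eq_single a₂]
        · exact hid _ _
        · intro b₂ _ hne
          exact hz _ _ _ _ (by rw [hlam]; simp [hsync₂ x₂ a₂ b₂ (Ne.symm hne)])
        · intro h; exact absurd (Finset.mem_univ a₂) h
      · intro x
        rw [← Fintype.sum_prod_type]
        exact hsum (x, x₂)
      · intro x y a b hl
        rw [Finset.sum_mul_sum]
        refine Finset.sum_eq_zero fun a₂ _ => Finset.sum_eq_zero fun b₂ _ => ?_
        exact hz _ _ _ _ (by rw [hlam]; simp [hl])
    · set x₁ : X₁ := Classical.arbitrary X₁
      refine ⟨𝒜, ‹_›, ‹_›, ‹_›, ‹_›, ‹_›, fun x a => ∑ a₁, e (x₁, x) (a₁, a), ?_, ?_, ?_, ?_⟩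
      · intro x a; simp [star_sum, hst]
      · intro x a
        rw [Finset.sum_mul_sum]
        refine Finset.sum_congr rfl fun a₁ _ => ?_
        rw [Finset.sum_eq_single a₁]
        · exact hid _ _
        · intro b₁ _ hne
          exact hz _ _ _ _ (by rw [hlam]; simp [hsync₁ x₁ a₁ b₁ (Ne.symm hne)])
        · intro h; exact absurd (Finset.mem_univ a₁) h
      · intro x
        rw [Finset.sum_comm, ← Fintype.sum_prod_type]
        exact hsum (x₁, x)
      · intro x y a b hl
        rw [Finset.sum_mul_sum]
        refine Finset.sum_eq_zero fun a₁ _ => Finset.sum_eq_zero fun b₁ _ => ?_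
        exact hz _ _ _ _ (by rw [hlam]; simp [hl])
  · rintro ⟨⟨𝒜₁, _, _, _, _, _, e₁, hst₁, hid₁, hsum₁, hz₁⟩,
      ⟨𝒜₂, _, _, _, _, _, e₂, hst₂, hid₂, hsum₂, hz₂⟩⟩
    refine ⟨𝒜₁ ⊗[ℂ] 𝒜₂, inferInstance, inferInstance, tensorStarRing, tensorStarModule,
      inferInstance, fun x a => e₁ x.1 a.1 ⊗ₜ[ℂ] e₂ x.2 a.2, ?_, ?_, ?_, ?_⟩
    · intro x a
      show tstar 𝒜₁ 𝒜₂ (e₁ x.1 a.1 ⊗ₜ[ℂ] e₂ x.2 a.2) = _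
      rw [tstar_tmul, hst₁, hst₂]
    · intro x a
      rw [Algebra.TensorProduct.tmul_mul_tmul, hid₁, hid₂]
    · intro x
      rw [Fintype.sum_prod_type]
      simp_rw [← TensorProduct.tmul_sum, ← TensorProduct.sum_tmul, hsum₁, hsum₂,
        Algebra.TensorProduct.one_def]
    · intro x y a b hl
      rw [Algebra.TensorProduct.tmul_mul_tmul]
      rcases Bool.and_eq_false_iff.mp hl with h | h
      · rw [hz₁ _ _ _ _ h, TensorProduct.zero_tmul]
      · rw [hz₂ _ _ _ _ h, TensorProduct.tmul_zero]
end

section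
/- Let 𝔾₁ = (X₁, A₁, λ₁) and 𝔾₂ = (X₂, A₂, λ₂) be synchronous games, let 𝒜 be a unital complex *-algebra, and let e_{(x₁,x₂),(a₁,a₂)} ∈ 𝒜 (x₁ ∈ X₁, x₂ ∈ X₂, a₁ ∈ A₁, a₂ ∈ A₂) satisfy: each e_{(x₁,x₂),(a₁,a₂)} is a self-adjoint idempotent, Σ_{(a₁,a₂) ∈ A₁×A₂} e_{(x₁,x₂),(a₁,a₂)} = 1 for every (x₁,x₂), and e_{(x₁,x₂),(a₁,a₂)} e_{(y₁,y₂),(b₁,b₂)} = 0 whenever (λ₁×λ₂)((x₁,x₂),(y₁,y₂),(a₁,a₂),(b₁,b₂)) = 0. Define f_{x₁,x₂,a₁} := Σ_{b ∈ A₂} e_{(x₁,x₂),(a₁,b)}. Then f_{x₁,x₂,a₁} = f_{x₁,x₂',a₁} for all x₂, x₂' ∈ X₂, and each f_{x₁,x₂,a₁} is a self-adjoint idempotent. -/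
/-- Given a perfect algebraic strategy `e` for the product game `𝔾₁ × 𝔾₂`, the elements
`f_{x₁,x₂,a₁} = ∑_{b ∈ A₂} e_{(x₁,x₂),(a₁,b)}` are independent of `x₂` and are self-adjoint
idempotents. -/
theorem prodStrategy_marginal_wellDefined_projection
    {X₁ A₁ X₂ A₂ : Type} [Fintype X₁] [Nonempty X₁] [Fintype A₁] [Nonempty A₁]
    [Fintype X₂] [Nonempty X₂] [Fintype A₂] [Nonempty A₂]
    (lam₁ : X₁ → X₁ → A₁ → A₁ → Bool) (lam₂ : X₂ → X₂ → A₂ → A₂ → Bool)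
    (hsync₁ : ∀ x a b, a ≠ b → lam₁ x x a b = false)
    (hsync₂ : ∀ x a b, a ≠ b → lam₂ x x a b = false)
    {𝒜 : Type} [Ring 𝒜] [Algebra ℂ 𝒜] [StarRing 𝒜] [StarModule ℂ 𝒜]
    (e : X₁ × X₂ → A₁ × A₂ → 𝒜)
    (hstar : ∀ x a, star (e x a) = e x a)
    (hidem : ∀ x a, e x a * e x a = e x a)
    (hsum : ∀ x, ∑ a, e x a = 1)
    (hrule : ∀ x y a b, prodRule lam₁ lam₂ x y a b = false → e x a * e y b = 0) :
    ∀ (x₁ : X₁) (x₂ x₂' : X₂) (a₁ : A₁),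
      (∑ b : A₂, e (x₁, x₂) (a₁, b)) = (∑ b : A₂, e (x₁, x₂') (a₁, b)) ∧
      star (∑ b : A₂, e (x₁, x₂) (a₁, b)) = (∑ b : A₂, e (x₁, x₂) (a₁, b)) ∧
      (∑ b : A₂, e (x₁, x₂) (a₁, b)) * (∑ b : A₂, e (x₁, x₂) (a₁, b)) =
        (∑ b : A₂, e (x₁, x₂) (a₁, b)) := by
  intro x₁ x₂ x₂' a₁
  -- cross terms with differing first answers vanish
  have key : ∀ (y₂ y₂' : X₂) (a a' : A₁), a ≠ a' →
      (∑ b : A₂, e (x₁, y₂) (a, b)) * (∑ b : A₂, e (x₁, y₂') (a', b)) = 0 := by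
    intro y₂ y₂' a a' hne
    rw [Finset.sum_mul_sum]
    apply Finset.sum_eq_zero; intro b _
    apply Finset.sum_eq_zero; intro b' _
    apply hrule
    simp [prodRule, hsync₁ x₁ a a' hne]
  -- f(y₂) * g(y₂') = f(y₂)
  have fg : ∀ y₂ y₂' : X₂,
      (∑ b : A₂, e (x₁, y₂) (a₁, b)) * (∑ b : A₂, e (x₁, y₂') (a₁, b)) =
        ∑ b : A₂, e (x₁, y₂) (a₁, b) := by
    intro y₂ y₂'
    have h1 : (∑ b : A₂, e (x₁, y₂) (a₁, b)) * (∑ p : A₁ × A₂, e (x₁, y₂') p) =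
        ∑ b : A₂, e (x₁, y₂) (a₁, b) := by rw [hsum]; simp
    rw [Fintype.sum_prod_type, Finset.mul_sum] at h1
    have h2 := Finset.sum_eq_single_of_mem a₁ (Finset.mem_univ a₁)
      (fun a' _ hne => key y₂ y₂' a₁ a' (Ne.symm hne))
    exact (h2.symm.trans h1)
  -- g(y₂') = f(y₂) * g(y₂')
  have gf : ∀ y₂ y₂' : X₂,
      (∑ b : A₂, e (x₁, y₂) (a₁, b)) * (∑ b : A₂, e (x₁, y₂') (a₁, b)) =
        ∑ b : A₂, e (x₁, y₂') (a₁, b) := by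
    intro y₂ y₂'
    have h1 : (∑ p : A₁ × A₂, e (x₁, y₂) p) * (∑ b : A₂, e (x₁, y₂') (a₁, b)) =
        ∑ b : A₂, e (x₁, y₂') (a₁, b) := by rw [hsum]; simp
    rw [Fintype.sum_prod_type, Finset.sum_mul] at h1
    have h2 := Finset.sum_eq_single_of_mem a₁ (Finset.mem_univ a₁)
      (fun a' _ hne => key y₂ y₂' a' a₁ hne)
    exact (h2.symm.trans h1)
  refine ⟨?_, ?_, ?_⟩
  · rw [← fg x₂ x₂', gf x₂ x₂']
  · rw [star_sum]
    exact Finset.sum_congr rfl fun b _ => hstar _ _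
  · rw [fg x₂ x₂]
end

section
/- Let 𝔾₁ = (X₁, A₁, λ₁) and 𝔾₂ = (X₂, A₂, λ₂) be synchronous games, let 𝒜 be a unital complex *-algebra, and let e_{(x₁,x₂),(a₁,a₂)} ∈ 𝒜 satisfy: each e_{(x₁,x₂),(a₁,a₂)} is a self-adjoint idempotent, Σ_{(a₁,a₂) ∈ A₁×A₂} e_{(x₁,x₂),(a₁,a₂)} = 1 for every (x₁,x₂), and e_{(x₁,x₂),(a₁,a₂)} e_{(y₁,y₂),(b₁,b₂)} = 0 whenever (λ₁×λ₂)((x₁,x₂),(y₁,y₂),(a₁,a₂),(b₁,b₂)) = 0. Fix any x₂⁰ ∈ X₂ and define f_{x₁,a₁} := Σ_{b ∈ A₂} e_{(x₁,x₂⁰),(a₁,b)}. Then Σ_{a ∈ A₁} f_{x₁,a} = 1 for every x₁ ∈ X₁, and f_{x₁,a₁} f_{y₁,b₁} = 0 whenever λ₁(x₁,y₁,a₁,b₁) = 0; in particular the elements f_{x₁,a₁} satisfy all the relations of a perfect algebraic strategy for 𝔾₁. -/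
/-- Given a perfect algebraic strategy `e` for the product game `𝔾₁ × 𝔾₂` and a fixed
`x₂⁰ ∈ X₂`, the elements `f_{x₁,a₁} = ∑_{b ∈ A₂} e_{(x₁,x₂⁰),(a₁,b)}` satisfy all the relations
of a perfect algebraic strategy for `𝔾₁`: they are self-adjoint idempotents, they sum to `1`
over `a₁` for each `x₁`, and `f_{x₁,a₁} f_{y₁,b₁} = 0` whenever `λ₁(x₁,y₁,a₁,b₁) = 0`. -/
theorem prodStrategy_marginal_is_perfect_strategy
    {X₁ A₁ X₂ A₂ : Type} [Fintype X₁] [Nonempty X₁] [Fintype A₁] [Nonempty A₁]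
    [Fintype X₂] [Nonempty X₂] [Fintype A₂] [Nonempty A₂]
    (lam₁ : X₁ → X₁ → A₁ → A₁ → Bool) (lam₂ : X₂ → X₂ → A₂ → A₂ → Bool)
    (hsync₁ : ∀ x a b, a ≠ b → lam₁ x x a b = false)
    (hsync₂ : ∀ x a b, a ≠ b → lam₂ x x a b = false)
    {𝒜 : Type} [Ring 𝒜] [Algebra ℂ 𝒜] [StarRing 𝒜] [StarModule ℂ 𝒜]
    (e : X₁ × X₂ → A₁ × A₂ → 𝒜)
    (hstar : ∀ x a, star (e x a) = e x a)
    (hidem : ∀ x a, e x a * e x a = e x a)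
    (hsum : ∀ x, ∑ a, e x a = 1)
    (hrule : ∀ x y a b, prodRule lam₁ lam₂ x y a b = false → e x a * e y b = 0)
    (x₂0 : X₂) (f : X₁ → A₁ → 𝒜)
    (hf : ∀ x₁ a₁, f x₁ a₁ = ∑ b : A₂, e (x₁, x₂0) (a₁, b)) :
    (∀ x₁ a₁, star (f x₁ a₁) = f x₁ a₁) ∧
    (∀ x₁ a₁, f x₁ a₁ * f x₁ a₁ = f x₁ a₁) ∧
    (∀ x₁, ∑ a : A₁, f x₁ a = 1) ∧
    (∀ x₁ y₁ a₁ b₁, lam₁ x₁ y₁ a₁ b₁ = false → f x₁ a₁ * f y₁ b₁ = 0) := by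

  have key : ∀ x₁ y₁ a₁ b₁ (b b' : A₂),
      lam₁ x₁ y₁ a₁ b₁ = false ∨ lam₂ x₂0 x₂0 b b' = false →
      e (x₁, x₂0) (a₁, b) * e (y₁, x₂0) (b₁, b') = 0 := by
    intro x₁ y₁ a₁ b₁ b b' h
    apply hrule
    simp [prodRule]
    rcases h with h | h
    · intro h'; rw [h'] at h; exact absurd h (by simp)
    · intro _; exact h
  refine ⟨?_, ?_, ?_, ?_⟩
  · intro x₁ a₁
    rw [hf]
    simp [star_sum, hstar]
  · intro x₁ a₁
    calc f x₁ a₁ * f x₁ a₁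
        = ∑ b, ∑ b', e (x₁, x₂0) (a₁, b) * e (x₁, x₂0) (a₁, b') := by
          rw [hf, Finset.sum_mul_sum]
      _ = ∑ b, e (x₁, x₂0) (a₁, b) := Finset.sum_congr rfl fun b _ => by
          rw [Finset.sum_eq_single b
            (fun b' _ hne => key x₁ x₁ a₁ a₁ b b' (Or.inr (hsync₂ _ _ _ (Ne.symm hne))))
            (by simp)]
          exact hidem _ _
      _ = f x₁ a₁ := (hf _ _).symm
  · intro x₁
    calc ∑ a, f x₁ a = ∑ a, ∑ b, e (x₁, x₂0) (a, b) := by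
          exact Finset.sum_congr rfl fun a _ => hf x₁ a
      _ = ∑ p : A₁ × A₂, e (x₁, x₂0) p := by
          rw [← Finset.sum_product']
          rfl
      _ = 1 := hsum _
  · intro x₁ y₁ a₁ b₁ h
    rw [hf, hf, Finset.sum_mul_sum]
    apply Finset.sum_eq_zero
    intro b _
    apply Finset.sum_eq_zero
    intro b' _
    exact key x₁ y₁ a₁ b₁ b b' (Or.inl h)
end

section
/- Let 𝔾₁ = (X₁, A₁, λ₁) and 𝔾₂ = (X₂, A₂, λ₂) be synchronous games, let 𝒜 be a unital complex *-algebra, and let e_{(x₁,x₂),(a₁,a₂)} ∈ 𝒜 satisfy: each e_{(x₁,x₂),(a₁,a₂)} is a self-adjoint idempotent, Σ_{(a₁,a₂) ∈ A₁×A₂} e_{(x₁,x₂),(a₁,a₂)} = 1 for every (x₁,x₂), and e_{(x₁,x₂),(a₁,a₂)} e_{(y₁,y₂),(b₁,b₂)} = 0 whenever (λ₁×λ₂)((x₁,x₂),(y₁,y₂),(a₁,a₂),(b₁,b₂)) = 0. Define f_{x₁,x₂,a₁} := Σ_{b ∈ A₂} e_{(x₁,x₂),(a₁,b)} and g_{x₁,x₂,a₂}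 := Σ_{a ∈ A₁} e_{(x₁,x₂),(a,a₂)}. Then for all x₁ ∈ X₁, x₂ ∈ X₂, a₁ ∈ A₁, a₂ ∈ A₂: f_{x₁,x₂,a₁} · g_{x₁,x₂,a₂} = e_{(x₁,x₂),(a₁,a₂)} = g_{x₁,x₂,a₂} · f_{x₁,x₂,a₁}. -/
/-- Given a perfect algebraic strategy `e` for the product game `𝔾₁ × 𝔾₂`, the marginal
elements `f_{x₁,x₂,a₁} = ∑_{b ∈ A₂} e_{(x₁,x₂),(a₁,b)}` and
`g_{x₁,x₂,a₂} = ∑_{a ∈ A₁} e_{(x₁,x₂),(a,a₂)}` satisfy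
`f_{x₁,x₂,a₁} g_{x₁,x₂,a₂} = e_{(x₁,x₂),(a₁,a₂)} = g_{x₁,x₂,a₂} f_{x₁,x₂,a₁}`. -/
theorem prodStrategy_marginals_commute
    {X₁ A₁ X₂ A₂ : Type} [Fintype X₁] [Nonempty X₁] [Fintype A₁] [Nonempty A₁]
    [Fintype X₂] [Nonempty X₂] [Fintype A₂] [Nonempty A₂]
    (lam₁ : X₁ → X₁ → A₁ → A₁ → Bool) (lam₂ : X₂ → X₂ → A₂ → A₂ → Bool)
    (hsync₁ : ∀ x a b, a ≠ b → lam₁ x x a b = false)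
    (hsync₂ : ∀ x a b, a ≠ b → lam₂ x x a b = false)
    {𝒜 : Type} [Ring 𝒜] [Algebra ℂ 𝒜] [StarRing 𝒜] [StarModule ℂ 𝒜]
    (e : X₁ × X₂ → A₁ × A₂ → 𝒜)
    (hstar : ∀ x a, star (e x a) = e x a)
    (hidem : ∀ x a, e x a * e x a = e x a)
    (hsum : ∀ x, ∑ a, e x a = 1)
    (hrule : ∀ x y a b, prodRule lam₁ lam₂ x y a b = false → e x a * e y b = 0) :
    ∀ (x₁ : X₁) (x₂ : X₂) (a₁ : A₁) (a₂ : A₂),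
      (∑ b : A₂, e (x₁, x₂) (a₁, b)) * (∑ a : A₁, e (x₁, x₂) (a, a₂)) = e (x₁, x₂) (a₁, a₂) ∧
      (∑ a : A₁, e (x₁, x₂) (a, a₂)) * (∑ b : A₂, e (x₁, x₂) (a₁, b)) = e (x₁, x₂) (a₁, a₂) := by
  intro x₁ x₂ a₁ a₂
  have orth : ∀ (p q : A₁ × A₂), p ≠ q → e (x₁, x₂) p * e (x₁, x₂) q = 0 := by
    intro p q hpq
    apply hrule
    unfold prodRule
    by_cases h1 : p.1 = q.1
    · have h2 : p.2 ≠ q.2 := fun h2 => hpq (Prod.ext h1 h2)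
      simp [hsync₂ x₂ p.2 q.2 h2]
    · simp [hsync₁ x₁ p.1 q.1 h1]
  constructor
  · rw [Finset.sum_mul_sum]
    rw [Finset.sum_eq_single a₂]
    · rw [Finset.sum_eq_single a₁]
      · exact hidem _ _
      · intro a _ ha
        exact orth _ _ (fun h => ha (congrArg Prod.fst h).symm)
      · simp
    · intro b _ hb
      apply Finset.sum_eq_zero
      intro a _
      by_cases ha : a = a₁
      · subst ha; exact orth _ _ (fun h => hb (congrArg Prod.snd h))
      · exact orth _ _ (fun h => ha (congrArg Prod.fst h).symm)
    · simp
  · rw [Finset.sum_mul_sum]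
    rw [Finset.sum_eq_single a₁]
    · rw [Finset.sum_eq_single a₂]
      · exact hidem _ _
      · intro b _ hb
        exact orth _ _ (fun h => hb (congrArg Prod.snd h).symm)
      · simp
    · intro a _ ha
      apply Finset.sum_eq_zero
      intro b _
      by_cases hb : b = a₂
      · subst hb; exact orth _ _ (fun h => ha (congrArg Prod.fst h))
      · exact orth _ _ (fun h => hb (congrArg Prod.snd h).symm)
    · simp
end

section
/- Let 𝔾₁ = (X₁, A₁, λ₁) and 𝔾₂ = (X₂, A₂, λ₂) be synchronous games, and let p₁ and p₂ be quantum commuting correlations over (X₁, A₁) and (X₂, A₂) respectively, which are perfect strategies for 𝔾₁ and 𝔾₂ respectively. Then the correlation p₁ ⊗ p₂ over (X₁ × X₂, A₁ × A₂), defined by (p₁ ⊗ p₂)((a₁,a₂),(b₁,b₂)|(x₁,x₂),(y₁,y₂)) = p₁(a₁,b₁|x₁,y₁)·p₂(a₂,b₂|x₂,y₂), is a quantum commuting correlation and is a perfect strategy for 𝔾₁ × 𝔾₂. -/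
/-- `p` is a correlation over `(X, A)`: nonnegative and, for each question pair, the answers are
distributed according to a probability distribution. -/
def IsCorrelation {X A : Type} [Fintype A] (p : X → X → A → A → ℝ) : Prop :=
  (∀ x y a b, 0 ≤ p x y a b) ∧ (∀ x y, ∑ a, ∑ b, p x y a b = 1)

/-- `p` is a quantum commuting correlation: it arises from commuting families of POVMs on a
Hilbert space `H` and a unit vector `ξ ∈ H` via `p(a,b|x,y) = ⟨E_{x,a} F_{y,b} ξ, ξ⟩`. -/
def IsQuantumCommutingCorrelation {X A : Type} [Fintype A] (p : X → X → A → A → ℝ) : Prop :=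
  ∃ (H : Type) (_ : NormedAddCommGroup H) (_ : InnerProductSpace ℂ H) (_ : CompleteSpace H)
    (ξ : H) (_ : ‖ξ‖ = 1) (E F : X → A → H →L[ℂ] H),
    (∀ x a, (E x a).IsPositive) ∧
    (∀ y b, (F y b).IsPositive) ∧
    (∀ x, ∑ a, E x a = 1) ∧
    (∀ y, ∑ b, F y b = 1) ∧
    (∀ x y a b, E x a * F y b = F y b * E x a) ∧
    (∀ x y a b, (p x y a b : ℂ) = inner ℂ ((E x a) ((F y b) ξ)) ξ)

/-- `p` is a perfect strategy for the game with rule function `lam`. -/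
def IsPerfectStrategy {X A : Type} (lam : X → X → A → A → Bool)
    (p : X → X → A → A → ℝ) : Prop :=
  ∀ x y a b, lam x y a b = false → p x y a b = 0

open scoped TensorProduct ComplexConjugate

namespace QCProd

variable {H₁ H₂ : Type} [NormedAddCommGroup H₁] [InnerProductSpace ℂ H₁]
  [NormedAddCommGroup H₂] [InnerProductSpace ℂ H₂]

/-- Bilinear functional on the tensor product: `u' ⊗ v' ↦ ⟪u,u'⟫⟪v,v'⟫`. -/
noncomputable def bilinForm (u : H₁) (v : H₂) : H₁ ⊗[ℂ] H₂ →ₗ[ℂ] ℂ :=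
  TensorProduct.lift ((LinearMap.mul ℂ ℂ).compl₁₂ (innerₛₗ ℂ u) (innerₛₗ ℂ v))

@[simp] lemma bilinForm_tmul (u : H₁) (v : H₂) (u' : H₁) (v' : H₂) :
    bilinForm u v (u' ⊗ₜ v') = (inner ℂ u u' : ℂ) * (inner ℂ v v' : ℂ) := rfl

/-- `phi u v` is the real-linear functional `t ↦ conj (bilinForm u v t)`;
on pure tensors `t = u' ⊗ v'` it gives `⟪u',u⟫⟪v',v⟫`. -/
noncomputable def phi (u : H₁) (v : H₂) : H₁ ⊗[ℂ] H₂ →ₗ[ℝ] ℂ :=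
  Complex.conjAe.toLinearMap ∘ₗ (bilinForm u v).restrictScalars ℝ

@[simp] lemma phi_apply (u : H₁) (v : H₂) (t : H₁ ⊗[ℂ] H₂) :
    phi u v t = conj (bilinForm u v t) := rfl

noncomputable def Phi : H₁ →ₗ[ℂ] H₂ →ₗ[ℂ] (H₁ ⊗[ℂ] H₂ →ₗ[ℝ] ℂ) where
  toFun u :=
    { toFun := fun v => phi u v
      map_add' := fun v v' => by
        apply LinearMap.ext; intro t
        have : bilinForm u (v + v') = bilinForm u v + bilinForm u v' := by
          apply TensorProduct.ext'; intro a b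
          simp [inner_add_left, add_mul, mul_add]
        simp [this]
      map_smul' := fun c v => by
        apply LinearMap.ext; intro t
        have : bilinForm u (c • v) = conj c • bilinForm u v := by
          apply TensorProduct.ext'; intro a b
          simp [inner_smul_left, mul_comm, mul_left_comm, mul_assoc]
        simp [this, Complex.mul_conj', mul_comm] }
  map_add' u u' := by
    apply LinearMap.ext; intro v; apply LinearMap.ext; intro t
    have : bilinForm (u + u') v = bilinForm u v + bilinForm u' v := by
      apply TensorProduct.ext'; intro a b
      simp [inner_add_left, add_mul]
    simp [this]
  map_smul' c u := by
    apply LinearMap.ext; intro v; apply LinearMap.ext; intro t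
    have : bilinForm (c • u) v = conj c • bilinForm u v := by
      apply TensorProduct.ext'; intro a b
      simp [inner_smul_left, mul_assoc, mul_left_comm]
    simp [this]

noncomputable def tinnerAux : H₁ ⊗[ℂ] H₂ →ₗ[ℂ] (H₁ ⊗[ℂ] H₂ →ₗ[ℝ] ℂ) :=
  TensorProduct.lift Phi

/-- The inner product on the algebraic tensor product. -/
noncomputable def tinner (t t' : H₁ ⊗[ℂ] H₂) : ℂ := tinnerAux t' t

@[simp] lemma tinner_tmul (u : H₁) (v : H₂) (u' : H₁) (v' : H₂) :
    tinner (u ⊗ₜ v) (u' ⊗ₜ[ℂ] v') = (inner ℂ u u' : ℂ) * (inner ℂ v v' : ℂ) := by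
  simp only [tinner, tinnerAux, TensorProduct.lift.tmul]
  show phi u' v' (u ⊗ₜ v) = _
  simp [inner_conj_symm]


lemma tinner_add_right (t a b : H₁ ⊗[ℂ] H₂) :
    tinner t (a + b) = tinner t a + tinner t b := by
  simp [tinner, map_add]

lemma tinner_smul_right (c : ℂ) (t a : H₁ ⊗[ℂ] H₂) :
    tinner t (c • a) = c * tinner t a := by
  simp [tinner, map_smul]

lemma tinner_zero_right (t : H₁ ⊗[ℂ] H₂) : tinner t 0 = 0 := by
  simp [tinner, map_zero]

lemma tinner_sum_right {ι : Type*} (s : Finset ι) (t : H₁ ⊗[ℂ] H₂)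
    (f : ι → H₁ ⊗[ℂ] H₂) : tinner t (∑ i ∈ s, f i) = ∑ i ∈ s, tinner t (f i) := by
  simp [tinner, map_sum]

lemma tinner_add_left (t a b : H₁ ⊗[ℂ] H₂) :
    tinner (a + b) t = tinner a t + tinner b t := by
  simp [tinner, map_add]

lemma tinner_zero_left (t : H₁ ⊗[ℂ] H₂) : tinner 0 t = 0 := by
  simp [tinner, map_zero]

lemma tinner_sum_left {ι : Type*} (s : Finset ι) (t : H₁ ⊗[ℂ] H₂)
    (f : ι → H₁ ⊗[ℂ] H₂) : tinner (∑ i ∈ s, f i) t = ∑ i ∈ s, tinner (f i) t := by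
  simp [tinner, map_sum]

lemma tinner_smul_left (c : ℂ) (t a : H₁ ⊗[ℂ] H₂) :
    tinner (c • a) t = conj c * tinner a t := by
  unfold tinner
  induction t using TensorProduct.induction_on with
  | zero => simp
  | tmul u v =>
      simp only [tinnerAux, TensorProduct.lift.tmul]
      show phi u v (c • a) = conj c * phi u v a
      simp [map_smul, Complex.mul_conj', mul_comm]
  | add x y hx hy => simp [map_add, LinearMap.add_apply, hx, hy, mul_add]

lemma tinner_conj_symm (a b : H₁ ⊗[ℂ] H₂) : conj (tinner b a) = tinner a b := by
  induction a using TensorProduct.induction_on with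
  | zero => simp [tinner_zero_left, tinner_zero_right]
  | tmul u v =>
      induction b using TensorProduct.induction_on with
      | zero => simp [tinner_zero_left, tinner_zero_right]
      | tmul u' v' => simp [tinner_tmul, inner_conj_symm]
      | add x y hx hy => simp [tinner_add_left, tinner_add_right, hx, hy]
  | add x y hx hy => simp [tinner_add_left, tinner_add_right, hx, hy]

lemma tinner_sum_sum {n m : ℕ} (u : Fin n → H₁) (v : Fin n → H₂)
    (u' : Fin m → H₁) (v' : Fin m → H₂) :
    tinner (∑ k, u k ⊗ₜ[ℂ] v k) (∑ l, u' l ⊗ₜ[ℂ] v' l)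
      = ∑ k, ∑ l, (inner ℂ (u k) (u' l) : ℂ) * (inner ℂ (v k) (v' l) : ℂ) := by
  rw [tinner_sum_left]
  exact Finset.sum_congr rfl fun k _ => by
    rw [tinner_sum_right]
    exact Finset.sum_congr rfl fun l _ => tinner_tmul _ _ _ _


lemma exists_orthonormal_right (t : H₁ ⊗[ℂ] H₂) :
    ∃ (n : ℕ) (u : Fin n → H₁) (w : Fin n → H₂),
      Orthonormal ℂ w ∧ t = ∑ k, u k ⊗ₜ[ℂ] w k := by
  obtain ⟨s, rfl⟩ := TensorProduct.exists_finset t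
  set V : Submodule ℂ H₂ := Submodule.span ℂ (Prod.snd '' (s : Set (H₁ × H₂))) with hV
  haveI : FiniteDimensional ℂ V :=
    FiniteDimensional.span_of_finite ℂ (s.finite_toSet.image _)
  let b := stdOrthonormalBasis ℂ V
  have hmem : ∀ p ∈ s, p.2 ∈ V := fun p hp =>
    Submodule.subset_span (Set.mem_image_of_mem Prod.snd hp)
  refine ⟨Module.finrank ℂ V,
    fun k => ∑ p ∈ s.attach, (b.repr ⟨p.1.2, hmem p.1 p.2⟩ k) • p.1.1,
    fun k => (b k : H₂), ?_, ?_⟩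
  · rw [orthonormal_iff_ite]
    intro i j
    rw [← Submodule.coe_inner]
    exact orthonormal_iff_ite.mp b.orthonormal i j
  · rw [← Finset.sum_attach s (fun p => p.1 ⊗ₜ[ℂ] p.2)]
    have hrepr : ∀ p : {x // x ∈ s}, (p.1.2 : H₂)
        = ∑ k, (b.repr ⟨p.1.2, hmem p.1 p.2⟩ k) • (b k : H₂) := by
      intro p
      have := b.sum_repr (⟨p.1.2, hmem p.1 p.2⟩ : V)
      calc (p.1.2 : H₂) = ((⟨p.1.2, hmem p.1 p.2⟩ : V) : H₂) := rfl
        _ = ((∑ k, (b.repr ⟨p.1.2, hmem p.1 p.2⟩ k) • b k : V) : H₂) := by rw [this]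
        _ = ∑ k, (b.repr ⟨p.1.2, hmem p.1 p.2⟩ k) • (b k : H₂) := by
            push_cast; rfl
    calc ∑ p ∈ s.attach, p.1.1 ⊗ₜ[ℂ] p.1.2
        = ∑ p ∈ s.attach, ∑ k, ((b.repr ⟨p.1.2, hmem p.1 p.2⟩ k) • p.1.1) ⊗ₜ[ℂ] (b k : H₂) := by
          refine Finset.sum_congr rfl fun p _ => ?_
          conv_lhs => rw [hrepr p]
          rw [TensorProduct.tmul_sum]
          exact Finset.sum_congr rfl fun k _ => by
            rw [TensorProduct.tmul_smul, TensorProduct.smul_tmul']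
      _ = ∑ k, (∑ p ∈ s.attach, (b.repr ⟨p.1.2, hmem p.1 p.2⟩ k) • p.1.1) ⊗ₜ[ℂ] (b k : H₂) := by
          rw [Finset.sum_comm]
          exact Finset.sum_congr rfl fun k _ => (TensorProduct.sum_tmul _ _ _).symm

lemma exists_orthonormal_left (t : H₁ ⊗[ℂ] H₂) :
    ∃ (n : ℕ) (u : Fin n → H₁) (w : Fin n → H₂),
      Orthonormal ℂ u ∧ t = ∑ k, u k ⊗ₜ[ℂ] w k := by
  obtain ⟨s, rfl⟩ := TensorProduct.exists_finset t
  set V : Submodule ℂ H₁ := Submodule.span ℂ (Prod.fst '' (s : Set (H₁ × H₂))) with hV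
  haveI : FiniteDimensional ℂ V :=
    FiniteDimensional.span_of_finite ℂ (s.finite_toSet.image _)
  let b := stdOrthonormalBasis ℂ V
  have hmem : ∀ p ∈ s, p.1 ∈ V := fun p hp =>
    Submodule.subset_span (Set.mem_image_of_mem Prod.fst hp)
  refine ⟨Module.finrank ℂ V, fun k => (b k : H₁),
    fun k => ∑ p ∈ s.attach, (b.repr ⟨p.1.1, hmem p.1 p.2⟩ k) • p.1.2, ?_, ?_⟩
  · rw [orthonormal_iff_ite]
    intro i j
    rw [← Submodule.coe_inner]
    exact orthonormal_iff_ite.mp b.orthonormal i j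
  · rw [← Finset.sum_attach s (fun p => p.1 ⊗ₜ[ℂ] p.2)]
    have hrepr : ∀ p : {x // x ∈ s}, (p.1.1 : H₁)
        = ∑ k, (b.repr ⟨p.1.1, hmem p.1 p.2⟩ k) • (b k : H₁) := by
      intro p
      have := b.sum_repr (⟨p.1.1, hmem p.1 p.2⟩ : V)
      calc (p.1.1 : H₁) = ((⟨p.1.1, hmem p.1 p.2⟩ : V) : H₁) := rfl
        _ = ((∑ k, (b.repr ⟨p.1.1, hmem p.1 p.2⟩ k) • b k : V) : H₁) := by rw [this]
        _ = ∑ k, (b.repr ⟨p.1.1, hmem p.1 p.2⟩ k) • (b k : H₁) := by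
            push_cast; rfl
    calc ∑ p ∈ s.attach, p.1.1 ⊗ₜ[ℂ] p.1.2
        = ∑ p ∈ s.attach, ∑ k, (b k : H₁) ⊗ₜ[ℂ] ((b.repr ⟨p.1.1, hmem p.1 p.2⟩ k) • p.1.2) := by
          refine Finset.sum_congr rfl fun p _ => ?_
          conv_lhs => rw [hrepr p]
          rw [TensorProduct.sum_tmul]
          exact Finset.sum_congr rfl fun k _ => TensorProduct.smul_tmul _ _ _
      _ = ∑ k, (b k : H₁) ⊗ₜ[ℂ] (∑ p ∈ s.attach, (b.repr ⟨p.1.1, hmem p.1 p.2⟩ k) • p.1.2) := by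
          rw [Finset.sum_comm]
          exact Finset.sum_congr rfl fun k _ => (TensorProduct.tmul_sum _ _ _).symm


lemma tinner_orthonormal_right {n : ℕ} (u u' : Fin n → H₁) (w : Fin n → H₂)
    (hw : Orthonormal ℂ w) :
    tinner (∑ k, u k ⊗ₜ[ℂ] w k) (∑ k, u' k ⊗ₜ[ℂ] w k) = ∑ k, (inner ℂ (u k) (u' k) : ℂ) := by
  rw [tinner_sum_sum]
  have h := orthonormal_iff_ite.mp hw
  refine Finset.sum_congr rfl fun k _ => ?_
  rw [Finset.sum_eq_single k]
  · rw [h k k]; simp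
  · intro l _ hl; rw [h k l, if_neg (Ne.symm hl)]; simp
  · simp

lemma tinner_orthonormal_left {n : ℕ} (u : Fin n → H₁) (w w' : Fin n → H₂)
    (hu : Orthonormal ℂ u) :
    tinner (∑ k, u k ⊗ₜ[ℂ] w k) (∑ k, u k ⊗ₜ[ℂ] w' k) = ∑ k, (inner ℂ (w k) (w' k) : ℂ) := by
  rw [tinner_sum_sum]
  have h := orthonormal_iff_ite.mp hu
  refine Finset.sum_congr rfl fun k _ => ?_
  rw [Finset.sum_eq_single k]
  · rw [h k k]; simp
  · intro l _ hl; rw [h k l, if_neg (Ne.symm hl)]; simp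
  · simp

lemma tinner_self_eq (t : H₁ ⊗[ℂ] H₂) :
    ∃ (n : ℕ) (u : Fin n → H₁) (w : Fin n → H₂), Orthonormal ℂ w ∧
      t = ∑ k, u k ⊗ₜ[ℂ] w k ∧ tinner t t = ((∑ k, ‖u k‖ ^ 2 : ℝ) : ℂ) := by
  obtain ⟨n, u, w, hw, rfl⟩ := exists_orthonormal_right t
  refine ⟨n, u, w, hw, rfl, ?_⟩
  rw [tinner_orthonormal_right u u w hw]
  push_cast
  exact Finset.sum_congr rfl fun k _ => by
    rw [inner_self_eq_norm_sq_to_K]; norm_cast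

lemma tinner_self_nonneg_real (t : H₁ ⊗[ℂ] H₂) :
    ∃ r : ℝ, 0 ≤ r ∧ tinner t t = (r : ℂ) := by
  obtain ⟨n, u, w, _, _, h⟩ := tinner_self_eq t
  exact ⟨_, Finset.sum_nonneg fun k _ => sq_nonneg _, h⟩

noncomputable def tensorCore : InnerProductSpace.Core ℂ (H₁ ⊗[ℂ] H₂) where
  inner := tinner
  conj_inner_symm := tinner_conj_symm
  re_inner_nonneg := fun t => by
    obtain ⟨r, hr, h⟩ := tinner_self_nonneg_real t
    show 0 ≤ RCLike.re (tinner t t)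
    rw [h]; simpa using hr
  add_left := fun x y z => tinner_add_left z x y
  smul_left := fun x y r => tinner_smul_left r y x
  definite := fun t ht => by
    replace ht : tinner t t = 0 := ht
    obtain ⟨n, u, w, hw, rfl, h⟩ := tinner_self_eq t
    rw [ht] at h
    have hsum : (∑ k, ‖u k‖ ^ 2 : ℝ) = 0 := by exact_mod_cast h.symm
    have hz : ∀ k ∈ Finset.univ, ‖u k‖ ^ 2 = (0:ℝ) :=
      (Finset.sum_eq_zero_iff_of_nonneg (fun k _ => sq_nonneg _)).mp hsum
    refine Finset.sum_eq_zero fun k _ => ?_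
    have : u k = 0 := by
      have := hz k (Finset.mem_univ k)
      simpa [pow_eq_zero_iff] using this
    rw [this, TensorProduct.zero_tmul]


lemma inner_eq_tinner (t t' : H₁ ⊗[ℂ] H₂) : (inner ℂ t t' : ℂ) = tinner t t' := by
  induction t using TensorProduct.induction_on with
  | zero => rw [inner_zero_left, tinner_zero_left]
  | tmul u v =>
      induction t' using TensorProduct.induction_on with
      | zero => rw [inner_zero_right, tinner_zero_right]
      | tmul u' v' => rw [TensorProduct.inner_tmul, tinner_tmul]
      | add x y hx hy => rw [inner_add_right, tinner_add_right, hx, hy]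
  | add x y hx hy => rw [inner_add_left, tinner_add_left, hx, hy]

lemma norm_sq_tensor (t : H₁ ⊗[ℂ] H₂) : (‖t‖ ^ 2 : ℝ) = RCLike.re (tinner t t) := by
  rw [← inner_eq_tinner]
  exact norm_sq_eq_re_inner (𝕜 := ℂ) t

/-- The algebraic tensor product of two continuous linear maps. -/
noncomputable def tmap (A : H₁ →L[ℂ] H₁) (B : H₂ →L[ℂ] H₂) :
    H₁ ⊗[ℂ] H₂ →ₗ[ℂ] H₁ ⊗[ℂ] H₂ :=
  TensorProduct.map A.toLinearMap B.toLinearMap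

@[simp] lemma tmap_tmul (A : H₁ →L[ℂ] H₁) (B : H₂ →L[ℂ] H₂) (u : H₁) (v : H₂) :
    tmap A B (u ⊗ₜ[ℂ] v) = A u ⊗ₜ[ℂ] B v := rfl

lemma norm_tmap_one_le (A : H₁ →L[ℂ] H₁) (t : H₁ ⊗[ℂ] H₂) :
    ‖tmap A 1 t‖ ≤ ‖A‖ * ‖t‖ := by
  obtain ⟨n, u, w, hw, rfl⟩ := exists_orthonormal_right t
  have hmap : tmap A 1 (∑ k, u k ⊗ₜ[ℂ] w k) = ∑ k, (A (u k)) ⊗ₜ[ℂ] w k := by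
    rw [map_sum]; rfl
  have h1 : (‖tmap A 1 (∑ k, u k ⊗ₜ[ℂ] w k)‖ : ℝ) ^ 2 = ∑ k, ‖A (u k)‖ ^ 2 := by
    rw [norm_sq_tensor, hmap, tinner_orthonormal_right _ _ _ hw]
    rw [show (∑ k, (inner ℂ (A (u k)) (A (u k)) : ℂ)) = ((∑ k, ‖A (u k)‖ ^2 : ℝ) : ℂ) by
      push_cast
      exact Finset.sum_congr rfl fun k _ => by rw [inner_self_eq_norm_sq_to_K]; norm_cast]
    simp [← Complex.ofReal_pow]
  have h2 : (‖(∑ k, u k ⊗ₜ[ℂ] w k : H₁ ⊗[ℂ] H₂)‖ : ℝ) ^ 2 = ∑ k, ‖u k‖ ^ 2 := by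
    rw [norm_sq_tensor, tinner_orthonormal_right _ _ _ hw]
    rw [show (∑ k, (inner ℂ (u k) (u k) : ℂ)) = ((∑ k, ‖u k‖ ^2 : ℝ) : ℂ) by
      push_cast
      exact Finset.sum_congr rfl fun k _ => by rw [inner_self_eq_norm_sq_to_K]; norm_cast]
    simp [← Complex.ofReal_pow]
  have hle : (‖tmap A 1 (∑ k, u k ⊗ₜ[ℂ] w k)‖ : ℝ) ^ 2 ≤ (‖A‖ * ‖(∑ k, u k ⊗ₜ[ℂ] w k : H₁ ⊗[ℂ] H₂)‖) ^ 2 := by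
    rw [h1, mul_pow, h2, Finset.mul_sum]
    refine Finset.sum_le_sum fun k _ => ?_
    have := A.le_opNorm (u k)
    calc ‖A (u k)‖ ^ 2 ≤ (‖A‖ * ‖u k‖) ^ 2 := by
          apply pow_le_pow_left₀ (norm_nonneg _) this
      _ = ‖A‖ ^ 2 * ‖u k‖ ^ 2 := by ring
  exact (pow_le_pow_iff_left₀ (norm_nonneg _)
    (mul_nonneg (norm_nonneg _) (norm_nonneg _)) two_ne_zero).mp hle


lemma norm_one_tmap_le (B : H₂ →L[ℂ] H₂) (t : H₁ ⊗[ℂ] H₂) :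
    ‖tmap 1 B t‖ ≤ ‖B‖ * ‖t‖ := by
  obtain ⟨n, u, w, hu, rfl⟩ := exists_orthonormal_left t
  have hmap : tmap 1 B (∑ k, u k ⊗ₜ[ℂ] w k) = ∑ k, u k ⊗ₜ[ℂ] (B (w k)) := by
    rw [map_sum]; rfl
  have h1 : (‖tmap 1 B (∑ k, u k ⊗ₜ[ℂ] w k)‖ : ℝ) ^ 2 = ∑ k, ‖B (w k)‖ ^ 2 := by
    rw [norm_sq_tensor, hmap, tinner_orthonormal_left _ _ _ hu]
    rw [show (∑ k, (inner ℂ (B (w k)) (B (w k)) : ℂ)) = ((∑ k, ‖B (w k)‖ ^2 : ℝ) : ℂ) by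
      push_cast
      exact Finset.sum_congr rfl fun k _ => by rw [inner_self_eq_norm_sq_to_K]; norm_cast]
    simp [← Complex.ofReal_pow]
  have h2 : (‖(∑ k, u k ⊗ₜ[ℂ] w k : H₁ ⊗[ℂ] H₂)‖ : ℝ) ^ 2 = ∑ k, ‖w k‖ ^ 2 := by
    rw [norm_sq_tensor, tinner_orthonormal_left _ _ _ hu]
    rw [show (∑ k, (inner ℂ (w k) (w k) : ℂ)) = ((∑ k, ‖w k‖ ^2 : ℝ) : ℂ) by
      push_cast
      exact Finset.sum_congr rfl fun k _ => by rw [inner_self_eq_norm_sq_to_K]; norm_cast]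
    simp [← Complex.ofReal_pow]
  have hle : (‖tmap 1 B (∑ k, u k ⊗ₜ[ℂ] w k)‖ : ℝ) ^ 2
      ≤ (‖B‖ * ‖(∑ k, u k ⊗ₜ[ℂ] w k : H₁ ⊗[ℂ] H₂)‖) ^ 2 := by
    rw [h1, mul_pow, h2, Finset.mul_sum]
    refine Finset.sum_le_sum fun k _ => ?_
    calc ‖B (w k)‖ ^ 2 ≤ (‖B‖ * ‖w k‖) ^ 2 := by
          apply pow_le_pow_left₀ (norm_nonneg _) (B.le_opNorm (w k))
      _ = ‖B‖ ^ 2 * ‖w k‖ ^ 2 := by ring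
  exact (pow_le_pow_iff_left₀ (norm_nonneg _)
    (mul_nonneg (norm_nonneg _) (norm_nonneg _)) two_ne_zero).mp hle

lemma tmap_comp (A A' : H₁ →L[ℂ] H₁) (B B' : H₂ →L[ℂ] H₂) (t : H₁ ⊗[ℂ] H₂) :
    tmap A B (tmap A' B' t) = tmap (A.comp A') (B.comp B') t := by
  induction t using TensorProduct.induction_on with
  | zero => simp
  | tmul u v => simp
  | add x y hx hy => simp [map_add, hx, hy]

lemma norm_tmap_le (A : H₁ →L[ℂ] H₁) (B : H₂ →L[ℂ] H₂) (t : H₁ ⊗[ℂ] H₂) :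
    ‖tmap A B t‖ ≤ ‖A‖ * ‖B‖ * ‖t‖ := by
  have : tmap A B t = tmap A 1 (tmap 1 B t) := by
    rw [tmap_comp]; congr 1 <;> simp [tmap]
  rw [this]
  calc ‖tmap A 1 (tmap 1 B t)‖ ≤ ‖A‖ * ‖tmap 1 B t‖ := norm_tmap_one_le _ _
    _ ≤ ‖A‖ * (‖B‖ * ‖t‖) := by
        apply mul_le_mul_of_nonneg_left (norm_one_tmap_le _ _) (norm_nonneg _)
    _ = ‖A‖ * ‖B‖ * ‖t‖ := by ring

/-- The tensor product of two continuous linear maps, as a continuous linear map. -/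
noncomputable def tmapL (A : H₁ →L[ℂ] H₁) (B : H₂ →L[ℂ] H₂) :
    H₁ ⊗[ℂ] H₂ →L[ℂ] H₁ ⊗[ℂ] H₂ :=
  LinearMap.mkContinuous (tmap A B) (‖A‖ * ‖B‖) (norm_tmap_le A B)

@[simp] lemma tmapL_apply (A : H₁ →L[ℂ] H₁) (B : H₂ →L[ℂ] H₂) (t : H₁ ⊗[ℂ] H₂) :
    tmapL A B t = tmap A B t := rfl


section CompletionLayer

open UniformSpace

lemma uniformInducing_toComplL :
    IsUniformInducing ((Completion.toComplL : (H₁ ⊗[ℂ] H₂) →L[ℂ] Completion (H₁ ⊗[ℂ] H₂)) :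
      (H₁ ⊗[ℂ] H₂) → Completion (H₁ ⊗[ℂ] H₂)) := by
  rw [Completion.coe_toComplL]
  exact Completion.isUniformInducing_coe _

lemma denseRange_toComplL :
    DenseRange ((Completion.toComplL : (H₁ ⊗[ℂ] H₂) →L[ℂ] Completion (H₁ ⊗[ℂ] H₂)) :
      (H₁ ⊗[ℂ] H₂) → Completion (H₁ ⊗[ℂ] H₂)) := by
  rw [Completion.coe_toComplL]
  exact Completion.denseRange_coe

lemma norm_xi (ξ₁ : H₁) (ξ₂ : H₂) (h₁ : ‖ξ₁‖ = 1) (h₂ : ‖ξ₂‖ = 1) :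
    ‖(↑(ξ₁ ⊗ₜ[ℂ] ξ₂) : Completion (H₁ ⊗[ℂ] H₂))‖ = 1 := by
  rw [Completion.norm_coe]
  have h : (‖(ξ₁ ⊗ₜ[ℂ] ξ₂ : H₁ ⊗[ℂ] H₂)‖ : ℝ) ^ 2 = 1 := by
    rw [norm_sq_tensor, tinner_tmul, inner_self_eq_norm_sq_to_K, inner_self_eq_norm_sq_to_K,
      h₁, h₂]
    norm_num
  nlinarith [norm_nonneg (ξ₁ ⊗ₜ[ℂ] ξ₂ : H₁ ⊗[ℂ] H₂)]

/-- The completion of the tensor product of two continuous linear maps. -/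
noncomputable def cmap (A : H₁ →L[ℂ] H₁) (B : H₂ →L[ℂ] H₂) :
    Completion (H₁ ⊗[ℂ] H₂) →L[ℂ] Completion (H₁ ⊗[ℂ] H₂) :=
  (Completion.toComplL.comp (tmapL A B)).extend Completion.toComplL

@[simp] lemma cmap_coe (A : H₁ →L[ℂ] H₁) (B : H₂ →L[ℂ] H₂) (t : H₁ ⊗[ℂ] H₂) :
    cmap A B (↑t : Completion (H₁ ⊗[ℂ] H₂)) = ↑(tmap A B t) := by
  have := ContinuousLinearMap.extend_eq (Completion.toComplL.comp (tmapL A B))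
    denseRange_toComplL uniformInducing_toComplL t
  simpa [cmap] using this

lemma cext {G₁ G₂ : Completion (H₁ ⊗[ℂ] H₂) →L[ℂ] Completion (H₁ ⊗[ℂ] H₂)}
    (h : ∀ t : H₁ ⊗[ℂ] H₂, G₁ ↑t = G₂ ↑t) : G₁ = G₂ :=
  ContinuousLinearMap.ext fun x =>
    Completion.induction_on x (isClosed_eq G₁.continuous G₂.continuous) h

lemma cmap_mul (A A' : H₁ →L[ℂ] H₁) (B B' : H₂ →L[ℂ] H₂) :
    cmap A B * cmap A' B' = cmap (A * A') (B * B') := by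
  apply cext; intro t
  show cmap A B (cmap A' B' ↑t) = _
  rw [cmap_coe, cmap_coe, cmap_coe]
  exact congrArg _ (tmap_comp A A' B B' t)

lemma cmap_one : cmap (1 : H₁ →L[ℂ] H₁) (1 : H₂ →L[ℂ] H₂) = 1 := by
  apply cext; intro t
  rw [cmap_coe]
  show _ = (1 : Completion (H₁ ⊗[ℂ] H₂) →L[ℂ] Completion (H₁ ⊗[ℂ] H₂)) ↑t
  rw [ContinuousLinearMap.one_apply]
  congr 1
  have : tmap (1 : H₁ →L[ℂ] H₁) (1 : H₂ →L[ℂ] H₂) = LinearMap.id := by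
    apply TensorProduct.ext'; intro u v; simp
  rw [this]; rfl

lemma tmap_sum {ι₁ ι₂ : Type} [Fintype ι₁] [Fintype ι₂]
    (A : ι₁ → H₁ →L[ℂ] H₁) (B : ι₂ → H₂ →L[ℂ] H₂) (t : H₁ ⊗[ℂ] H₂) :
    ∑ a : ι₁ × ι₂, tmap (A a.1) (B a.2) t = tmap (∑ a₁, A a₁) (∑ a₂, B a₂) t := by
  induction t using TensorProduct.induction_on with
  | zero => simp
  | tmul u v =>
      simp only [tmap_tmul, ContinuousLinearMap.sum_apply]
      rw [Fintype.sum_prod_type, TensorProduct.sum_tmul]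
      refine Finset.sum_congr rfl fun a₁ _ => ?_
      show ∑ a₂, (A a₁) u ⊗ₜ[ℂ] (B a₂) v = _
      exact (TensorProduct.tmul_sum _ _ _).symm
  | add x y hx hy => simp only [map_add, Finset.sum_add_distrib, hx, hy]

lemma cmap_sum {ι₁ ι₂ : Type} [Fintype ι₁] [Fintype ι₂]
    (A : ι₁ → H₁ →L[ℂ] H₁) (B : ι₂ → H₂ →L[ℂ] H₂) :
    ∑ a : ι₁ × ι₂, cmap (A a.1) (B a.2) = cmap (∑ a₁, A a₁) (∑ a₂, B a₂) := by
  apply cext; intro t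
  rw [ContinuousLinearMap.sum_apply, cmap_coe]
  have h2 : ∀ a : ι₁ × ι₂, cmap (A a.1) (B a.2) (↑t : Completion (H₁ ⊗[ℂ] H₂))
      = ↑(tmap (A a.1) (B a.2) t) := fun a => cmap_coe _ _ _
  rw [Finset.sum_congr rfl (fun a _ => h2 a)]
  have hc : ∀ x : H₁ ⊗[ℂ] H₂, (↑x : Completion (H₁ ⊗[ℂ] H₂))
      = Completion.toComplL (𝕜 := ℂ) x := fun _ => rfl
  simp_rw [hc]
  rw [← map_sum]
  exact congrArg _ (tmap_sum A B t)


variable [CompleteSpace H₁] [CompleteSpace H₂]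

lemma tinner_tmap_symm {A : H₁ →L[ℂ] H₁} {B : H₂ →L[ℂ] H₂}
    (hA : IsSelfAdjoint A) (hB : IsSelfAdjoint B) (t t' : H₁ ⊗[ℂ] H₂) :
    tinner (tmap A B t) t' = tinner t (tmap A B t') := by
  have hA' := ContinuousLinearMap.isSelfAdjoint_iff_isSymmetric.mp hA
  have hB' := ContinuousLinearMap.isSelfAdjoint_iff_isSymmetric.mp hB
  induction t using TensorProduct.induction_on with
  | zero => simp [tinner_zero_left, tinner_zero_right]
  | tmul u v =>
      induction t' using TensorProduct.induction_on with
      | zero => simp [tinner_zero_left, tinner_zero_right]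
      | tmul u' v' =>
          simp only [tmap_tmul, tinner_tmul]
          exact congrArg₂ (· * ·) (hA' u u') (hB' v v')
      | add x y hx hy => simp only [map_add, tinner_add_right, hx, hy]
  | add x y hx hy => simp only [map_add, tinner_add_left, hx, hy]

lemma tinner_tmap_sq {S : H₁ →L[ℂ] H₁} {R : H₂ →L[ℂ] H₂}
    (hS : IsSelfAdjoint S) (hR : IsSelfAdjoint R) (t t' : H₁ ⊗[ℂ] H₂) :
    tinner (tmap (S * S) (R * R) t) t' = tinner (tmap S R t) (tmap S R t') := by
  have h1 : tmap (S * S) (R * R) t = tmap S R (tmap S R t) := by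
    rw [tmap_comp]; rfl
  rw [h1]
  exact tinner_tmap_symm hS hR (tmap S R t) t'

lemma tinner_tmap_self_nonneg {A : H₁ →L[ℂ] H₁} {B : H₂ →L[ℂ] H₂}
    (hA : A.IsPositive) (hB : B.IsPositive) (t : H₁ ⊗[ℂ] H₂) :
    ∃ r : ℝ, 0 ≤ r ∧ tinner (tmap A B t) t = (r : ℂ) := by
  obtain ⟨S, hS, -, hS2⟩ := CFC.exists_sqrt_of_isSelfAdjoint_of_quasispectrumRestricts
    hA.isSelfAdjoint hA.spectrumRestricts
  obtain ⟨R, hR, -, hR2⟩ := CFC.exists_sqrt_of_isSelfAdjoint_of_quasispectrumRestricts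
    hB.isSelfAdjoint hB.spectrumRestricts
  have hA' : A = S * S := hS2.symm
  have hB' : B = R * R := hR2.symm
  rw [hA', hB', tinner_tmap_sq hS hR]
  exact tinner_self_nonneg_real _

open UniformSpace in
lemma cmap_isPositive {A : H₁ →L[ℂ] H₁} {B : H₂ →L[ℂ] H₂}
    (hA : A.IsPositive) (hB : B.IsPositive) : (cmap A B).IsPositive := by
  constructor
  · intro x y
    show (inner ℂ ((cmap A B) x) y : ℂ) = inner ℂ x ((cmap A B) y)
    refine Completion.induction_on₂ x y ?_ ?_
    · apply isClosed_eq
      · exact Continuous.inner ((cmap A B).continuous.comp continuous_fst) continuous_snd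
      · exact Continuous.inner continuous_fst ((cmap A B).continuous.comp continuous_snd)
    · intro t t'
      rw [cmap_coe, cmap_coe, Completion.inner_coe, Completion.inner_coe,
        inner_eq_tinner, inner_eq_tinner]
      exact tinner_tmap_symm hA.isSelfAdjoint hB.isSelfAdjoint t t'
  · intro x
    show 0 ≤ RCLike.re (inner ℂ ((cmap A B) x) x : ℂ)
    refine Completion.induction_on x ?_ ?_
    · apply isClosed_le continuous_const
      exact (RCLike.continuous_re).comp ((cmap A B).continuous.inner continuous_id)
    · intro t
      rw [cmap_coe, Completion.inner_coe, inner_eq_tinner]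
      obtain ⟨r, hr, h⟩ := tinner_tmap_self_nonneg hA hB t
      show 0 ≤ RCLike.re (tinner (tmap A B t) t)
      rw [h]
      simpa using hr

end CompletionLayer

end QCProd


/-- If `p₁` and `p₂` are quantum commuting correlations that are perfect strategies for the
synchronous games `𝔾₁` and `𝔾₂` respectively, then `p₁ ⊗ p₂` is a quantum commuting
correlation and a perfect strategy for `𝔾₁ × 𝔾₂`. -/
theorem prod_quantumCommuting_perfect
    {X₁ A₁ X₂ A₂ : Type} [Fintype X₁] [Nonempty X₁] [Fintype A₁] [Nonempty A₁]
    [Fintype X₂] [Nonempty X₂] [Fintype A₂] [Nonempty A₂]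
    (lam₁ : X₁ → X₁ → A₁ → A₁ → Bool) (lam₂ : X₂ → X₂ → A₂ → A₂ → Bool)
    (hsync₁ : ∀ x a b, a ≠ b → lam₁ x x a b = false)
    (hsync₂ : ∀ x a b, a ≠ b → lam₂ x x a b = false)
    (p₁ : X₁ → X₁ → A₁ → A₁ → ℝ) (p₂ : X₂ → X₂ → A₂ → A₂ → ℝ)
    (hcorr₁ : IsCorrelation p₁) (hcorr₂ : IsCorrelation p₂)
    (hqc₁ : IsQuantumCommutingCorrelation p₁) (hqc₂ : IsQuantumCommutingCorrelation p₂)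
    (hperf₁ : IsPerfectStrategy lam₁ p₁) (hperf₂ : IsPerfectStrategy lam₂ p₂) :
    IsCorrelation (fun (x y : X₁ × X₂) (a b : A₁ × A₂) =>
        p₁ x.1 y.1 a.1 b.1 * p₂ x.2 y.2 a.2 b.2) ∧
    IsQuantumCommutingCorrelation (fun (x y : X₁ × X₂) (a b : A₁ × A₂) =>
        p₁ x.1 y.1 a.1 b.1 * p₂ x.2 y.2 a.2 b.2) ∧
    IsPerfectStrategy (prodRule lam₁ lam₂) (fun (x y : X₁ × X₂) (a b : A₁ × A₂) =>
        p₁ x.1 y.1 a.1 b.1 * p₂ x.2 y.2 a.2 b.2) := by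
  obtain ⟨K₁, i₁a, i₁b, i₁c, ξ₁, hξ₁, E₁, F₁, hE₁pos, hF₁pos, hE₁sum, hF₁sum, hcomm₁, hval₁⟩ := hqc₁
  obtain ⟨K₂, i₂a, i₂b, i₂c, ξ₂, hξ₂, E₂, F₂, hE₂pos, hF₂pos, hE₂sum, hF₂sum, hcomm₂, hval₂⟩ := hqc₂
  letI := i₁a; letI := i₁b; letI := i₁c
  letI := i₂a; letI := i₂b; letI := i₂c
  refine ⟨⟨fun x y a b => mul_nonneg (hcorr₁.1 _ _ _ _) (hcorr₂.1 _ _ _ _), fun x y => ?_⟩,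
    ?_, ?_⟩
  · calc ∑ a : A₁ × A₂, ∑ b : A₁ × A₂, p₁ x.1 y.1 a.1 b.1 * p₂ x.2 y.2 a.2 b.2
        = ∑ a : A₁ × A₂, (∑ b₁, p₁ x.1 y.1 a.1 b₁) * (∑ b₂, p₂ x.2 y.2 a.2 b₂) := by
          refine Finset.sum_congr rfl fun a _ => ?_
          simp only [Fintype.sum_prod_type]
          rw [← Finset.sum_mul_sum]
      _ = (∑ a₁, ∑ b₁, p₁ x.1 y.1 a₁ b₁) * (∑ a₂, ∑ b₂, p₂ x.2 y.2 a₂ b₂) := by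
          simp only [Fintype.sum_prod_type]
          rw [← Finset.sum_mul_sum]
      _ = 1 := by rw [hcorr₁.2, hcorr₂.2, mul_one]
  · refine ⟨UniformSpace.Completion (K₁ ⊗[ℂ] K₂), inferInstance, inferInstance, inferInstance,
      ↑(ξ₁ ⊗ₜ[ℂ] ξ₂), QCProd.norm_xi ξ₁ ξ₂ hξ₁ hξ₂,
      fun x a => QCProd.cmap (E₁ x.1 a.1) (E₂ x.2 a.2),
      fun y b => QCProd.cmap (F₁ y.1 b.1) (F₂ y.2 b.2),
      fun x a => QCProd.cmap_isPositive (hE₁pos x.1 a.1) (hE₂pos x.2 a.2),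
      fun y b => QCProd.cmap_isPositive (hF₁pos y.1 b.1) (hF₂pos y.2 b.2),
      ?_, ?_, ?_, ?_⟩
    · intro x
      rw [QCProd.cmap_sum (fun a₁ => E₁ x.1 a₁) (fun a₂ => E₂ x.2 a₂),
        hE₁sum x.1, hE₂sum x.2, QCProd.cmap_one]
    · intro y
      rw [QCProd.cmap_sum (fun b₁ => F₁ y.1 b₁) (fun b₂ => F₂ y.2 b₂),
        hF₁sum y.1, hF₂sum y.2, QCProd.cmap_one]
    · intro x y a b
      rw [QCProd.cmap_mul, QCProd.cmap_mul, hcomm₁ x.1 y.1 a.1 b.1, hcomm₂ x.2 y.2 a.2 b.2]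
    · intro x y a b
      have h1 : QCProd.cmap (F₁ y.1 b.1) (F₂ y.2 b.2)
          (↑(ξ₁ ⊗ₜ[ℂ] ξ₂) : UniformSpace.Completion (K₁ ⊗[ℂ] K₂))
          = ↑(QCProd.tmap (F₁ y.1 b.1) (F₂ y.2 b.2) (ξ₁ ⊗ₜ[ℂ] ξ₂)) := QCProd.cmap_coe _ _ _
      rw [h1, QCProd.cmap_coe, UniformSpace.Completion.inner_coe]
      have h2 : QCProd.tmap (E₁ x.1 a.1) (E₂ x.2 a.2)
            (QCProd.tmap (F₁ y.1 b.1) (F₂ y.2 b.2) (ξ₁ ⊗ₜ[ℂ] ξ₂))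
          = (E₁ x.1 a.1 (F₁ y.1 b.1 ξ₁)) ⊗ₜ[ℂ] (E₂ x.2 a.2 (F₂ y.2 b.2 ξ₂)) := by
        simp
      rw [h2]
      have h3 : (inner ℂ ((E₁ x.1 a.1 (F₁ y.1 b.1 ξ₁)) ⊗ₜ[ℂ] (E₂ x.2 a.2 (F₂ y.2 b.2 ξ₂)))
          (ξ₁ ⊗ₜ[ℂ] ξ₂) : ℂ)
          = (inner ℂ (E₁ x.1 a.1 (F₁ y.1 b.1 ξ₁)) ξ₁ : ℂ)
            * (inner ℂ (E₂ x.2 a.2 (F₂ y.2 b.2 ξ₂)) ξ₂ : ℂ) := by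
        rw [QCProd.inner_eq_tinner]; exact QCProd.tinner_tmul _ _ _ _
      rw [h3, ← hval₁ x.1 y.1 a.1 b.1, ← hval₂ x.2 y.2 a.2 b.2]
      push_cast
      ring
  · intro x y a b h
    rw [prodRule] at h
    show p₁ x.1 y.1 a.1 b.1 * p₂ x.2 y.2 a.2 b.2 = 0
    rcases Bool.and_eq_false_iff.mp h with h' | h'
    · rw [hperf₁ x.1 y.1 a.1 b.1 h', zero_mul]
    · rw [hperf₂ x.2 y.2 a.2 b.2 h', mul_zero]
end

section
/- Let (𝔾₁, π₁) and (𝔾₂, π₂) be synchronous games with densities, with 𝔾ᵢ = (Xᵢ, Aᵢ, λᵢ). Then ω_ns^s(𝔾₁, π₁) · ω_ns^s(𝔾₂, π₂) ≤ ω_ns^s(𝔾₁ × 𝔾₂, π₁ × π₂), where (π₁ × π₂)((x₁,x₂),(y₁,y₂)) = π₁(x₁,y₁)·π₂(x₂,y₂), and ω_ns^s denotes the synchronous nonsignalling value. -/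
/-- `p` is a synchronous correlation. -/
def IsSynchronousCorrelation {X A : Type} (p : X → X → A → A → ℝ) : Prop :=
  ∀ x a b, a ≠ b → p x x a b = 0

/-- `pi` is a probability distribution on `X × X`. -/
def IsDensity {X : Type} [Fintype X] (pi : X → X → ℝ) : Prop :=
  (∀ x y, 0 ≤ pi x y) ∧ ∑ x, ∑ y, pi x y = 1

/-- The product density `(π₁ × π₂)((x₁,x₂),(y₁,y₂)) = π₁(x₁,y₁) · π₂(x₂,y₂)`. -/
def prodDensity {X₁ X₂ : Type} (pi₁ : X₁ → X₁ → ℝ) (pi₂ : X₂ → X₂ → ℝ)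
    (x y : X₁ × X₂) : ℝ :=
  pi₁ x.1 y.1 * pi₂ x.2 y.2

/-- The synchronous value of the game `(lam, pi)` over the class `C` of correlations:
the supremum of the expected winning probability over synchronous correlations in `C`. -/
noncomputable def syncValue {X A : Type} [Fintype X] [Fintype A]
    (C : (X → X → A → A → ℝ) → Prop)
    (lam : X → X → A → A → Bool) (pi : X → X → ℝ) : ℝ :=
  sSup { v : ℝ | ∃ p, C p ∧ IsSynchronousCorrelation p ∧
    v = ∑ x, ∑ y, ∑ a, ∑ b, pi x y * (if lam x y a b then p x y a b else 0) }

/-- `p` is a nonsignalling correlation. -/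
def IsNonsignallingCorrelation {X A : Type} [Fintype A] (p : X → X → A → A → ℝ) : Prop :=
  IsCorrelation p ∧
  (∀ x y y' a, ∑ b, p x y a b = ∑ b, p x y' a b) ∧
  (∀ x x' y b, ∑ a, p x y a b = ∑ a, p x' y a b)

/-! ### Auxiliary lemmas -/

lemma sum_pair_mul {I₁ I₂ : Type} [Fintype I₁] [Fintype I₂] (f : I₁ → ℝ) (g : I₂ → ℝ) :
    ∑ i : I₁ × I₂, f i.1 * g i.2 = (∑ i₁, f i₁) * (∑ i₂, g i₂) := by
  rw [Finset.sum_mul_sum, Fintype.sum_prod_type]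

lemma sum2_pair_mul {B₁ B₂ C₁ C₂ : Type} [Fintype B₁] [Fintype B₂] [Fintype C₁] [Fintype C₂]
    (f : B₁ → C₁ → ℝ) (g : B₂ → C₂ → ℝ) :
    ∑ a : B₁ × B₂, ∑ b : C₁ × C₂, f a.1 b.1 * g a.2 b.2
    = (∑ a₁, ∑ b₁, f a₁ b₁) * (∑ a₂, ∑ b₂, g a₂ b₂) := by
  calc ∑ a : B₁ × B₂, ∑ b : C₁ × C₂, f a.1 b.1 * g a.2 b.2
      = ∑ a : B₁ × B₂, (∑ b₁, f a.1 b₁) * (∑ b₂, g a.2 b₂) :=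
        Finset.sum_congr rfl fun a _ =>
          sum_pair_mul (fun b₁ => f a.1 b₁) (fun b₂ => g a.2 b₂)
    _ = _ := sum_pair_mul (fun a₁ => ∑ b₁, f a₁ b₁) (fun a₂ => ∑ b₂, g a₂ b₂)

lemma sum4_pair_mul {X₁ X₂ A₁ A₂ : Type} [Fintype X₁] [Fintype X₂] [Fintype A₁] [Fintype A₂]
    (F : X₁ → X₁ → A₁ → A₁ → ℝ) (G : X₂ → X₂ → A₂ → A₂ → ℝ) :
    ∑ x : X₁ × X₂, ∑ y : X₁ × X₂, ∑ a : A₁ × A₂, ∑ b : A₁ × A₂,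
      F x.1 y.1 a.1 b.1 * G x.2 y.2 a.2 b.2
    = (∑ x₁, ∑ y₁, ∑ a₁, ∑ b₁, F x₁ y₁ a₁ b₁) * (∑ x₂, ∑ y₂, ∑ a₂, ∑ b₂, G x₂ y₂ a₂ b₂) := by
  calc ∑ x : X₁ × X₂, ∑ y : X₁ × X₂, ∑ a : A₁ × A₂, ∑ b : A₁ × A₂,
        F x.1 y.1 a.1 b.1 * G x.2 y.2 a.2 b.2
      = ∑ x : X₁ × X₂, ∑ y : X₁ × X₂,
          (∑ a₁, ∑ b₁, F x.1 y.1 a₁ b₁) * (∑ a₂, ∑ b₂, G x.2 y.2 a₂ b₂) :=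
        Finset.sum_congr rfl fun x _ => Finset.sum_congr rfl fun y _ =>
          sum2_pair_mul (F x.1 y.1) (G x.2 y.2)
    _ = _ := sum2_pair_mul (fun x₁ y₁ => ∑ a₁, ∑ b₁, F x₁ y₁ a₁ b₁)
          (fun x₂ y₂ => ∑ a₂, ∑ b₂, G x₂ y₂ a₂ b₂)

/-- The value set of a game over synchronous nonsignalling correlations. -/
def valSet {X A : Type} [Fintype X] [Fintype A]
    (lam : X → X → A → A → Bool) (pi : X → X → ℝ) : Set ℝ :=
  { v : ℝ | ∃ p, IsNonsignallingCorrelation p ∧ IsSynchronousCorrelation p ∧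
    v = ∑ x, ∑ y, ∑ a, ∑ b, pi x y * (if lam x y a b then p x y a b else 0) }

lemma valSet_nonempty {X A : Type} [Fintype X] [Fintype A] [Nonempty A]
    (lam : X → X → A → A → Bool) (pi : X → X → ℝ) : (valSet lam pi).Nonempty := by
  classical
  obtain ⟨a₀⟩ := ‹Nonempty A›
  refine ⟨_, ⟨fun _ _ a b => (if a = a₀ then (1:ℝ) else 0) * (if b = a₀ then 1 else 0),
    ?_, ?_, rfl⟩⟩
  · refine ⟨⟨fun x y a b => by positivity, fun x y => by
      simp [← Finset.sum_mul, ← Finset.mul_sum]⟩, fun x y y' a => rfl,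
      fun x x' y b => rfl⟩
  · intro x a b hab
    by_cases h : a = a₀
    · have hb : b ≠ a₀ := fun hb => hab (h.trans hb.symm)
      simp [hb]
    · simp [h]

lemma valSet_nonneg {X A : Type} [Fintype X] [Fintype A]
    (lam : X → X → A → A → Bool) (pi : X → X → ℝ) (hpi : IsDensity pi) :
    ∀ v ∈ valSet lam pi, 0 ≤ v := by
  rintro v ⟨p, ⟨⟨hp0, _⟩, _⟩, _, rfl⟩
  refine Finset.sum_nonneg fun x _ => Finset.sum_nonneg fun y _ =>
    Finset.sum_nonneg fun a _ => Finset.sum_nonneg fun b _ => ?_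
  have := hp0 x y a b
  have := hpi.1 x y
  positivity

lemma valSet_le_one {X A : Type} [Fintype X] [Fintype A]
    (lam : X → X → A → A → Bool) (pi : X → X → ℝ) (hpi : IsDensity pi) :
    ∀ v ∈ valSet lam pi, v ≤ 1 := by
  rintro v ⟨p, ⟨⟨hp0, hp1⟩, _⟩, _, rfl⟩
  calc ∑ x, ∑ y, ∑ a, ∑ b, pi x y * (if lam x y a b then p x y a b else 0)
      ≤ ∑ x, ∑ y, pi x y * 1 := by
        refine Finset.sum_le_sum fun x _ => Finset.sum_le_sum fun y _ => ?_
        simp_rw [← Finset.mul_sum]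
        refine mul_le_mul_of_nonneg_left ?_ (hpi.1 x y)
        calc ∑ a, ∑ b, (if lam x y a b then p x y a b else 0)
            ≤ ∑ a, ∑ b, p x y a b :=
              Finset.sum_le_sum fun a _ => Finset.sum_le_sum fun b _ => by
                split <;> simp [hp0 x y a b]
          _ = 1 := hp1 x y
    _ = 1 := by simp_rw [mul_one]; exact hpi.2

lemma valSet_bddAbove {X A : Type} [Fintype X] [Fintype A]
    (lam : X → X → A → A → Bool) (pi : X → X → ℝ) (hpi : IsDensity pi) :
    BddAbove (valSet lam pi) :=
  ⟨1, valSet_le_one lam pi hpi⟩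

/-- Products of value-set elements are in the product value set. -/
lemma mul_mem_valSet_prod {X₁ A₁ X₂ A₂ : Type} [Fintype X₁] [Fintype A₁]
    [Fintype X₂] [Fintype A₂]
    (lam₁ : X₁ → X₁ → A₁ → A₁ → Bool) (lam₂ : X₂ → X₂ → A₂ → A₂ → Bool)
    (pi₁ : X₁ → X₁ → ℝ) (pi₂ : X₂ → X₂ → ℝ)
    {v₁ v₂ : ℝ} (h₁ : v₁ ∈ valSet lam₁ pi₁) (h₂ : v₂ ∈ valSet lam₂ pi₂) :
    v₁ * v₂ ∈ valSet (prodRule lam₁ lam₂) (prodDensity pi₁ pi₂) := by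
  obtain ⟨p₁, ⟨⟨hp₁0, hp₁1⟩, hns₁A, hns₁B⟩, hsyn₁, rfl⟩ := h₁
  obtain ⟨p₂, ⟨⟨hp₂0, hp₂1⟩, hns₂A, hns₂B⟩, hsyn₂, rfl⟩ := h₂
  refine ⟨fun x y a b => p₁ x.1 y.1 a.1 b.1 * p₂ x.2 y.2 a.2 b.2, ⟨⟨?_, ?_⟩, ?_, ?_⟩, ?_, ?_⟩
  · exact fun x y a b => mul_nonneg (hp₁0 _ _ _ _) (hp₂0 _ _ _ _)
  · intro x y
    rw [sum2_pair_mul (p₁ x.1 y.1) (p₂ x.2 y.2), hp₁1, hp₂1, one_mul]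
  · intro x y y' a
    rw [sum_pair_mul (p₁ x.1 y.1 a.1) (p₂ x.2 y.2 a.2),
      sum_pair_mul (p₁ x.1 y'.1 a.1) (p₂ x.2 y'.2 a.2), hns₁A x.1 y.1 y'.1 a.1,
      hns₂A x.2 y.2 y'.2 a.2]
  · intro x x' y b
    rw [sum_pair_mul (fun a₁ => p₁ x.1 y.1 a₁ b.1) (fun a₂ => p₂ x.2 y.2 a₂ b.2),
      sum_pair_mul (fun a₁ => p₁ x'.1 y.1 a₁ b.1) (fun a₂ => p₂ x'.2 y.2 a₂ b.2),
      hns₁B x.1 x'.1 y.1 b.1, hns₂B x.2 x'.2 y.2 b.2]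
  · intro x a b hab
    have hne : ¬(a.1 = b.1 ∧ a.2 = b.2) := fun h => hab (Prod.ext h.1 h.2)
    show p₁ x.1 x.1 a.1 b.1 * p₂ x.2 x.2 a.2 b.2 = 0
    rcases not_and_or.mp hne with h | h
    · rw [hsyn₁ x.1 a.1 b.1 h, zero_mul]
    · rw [hsyn₂ x.2 a.2 b.2 h, mul_zero]
  · have hterm : ∀ (x y : X₁ × X₂) (a b : A₁ × A₂),
        prodDensity pi₁ pi₂ x y *
          (if prodRule lam₁ lam₂ x y a b then p₁ x.1 y.1 a.1 b.1 * p₂ x.2 y.2 a.2 b.2 else 0)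
        = (pi₁ x.1 y.1 * (if lam₁ x.1 y.1 a.1 b.1 then p₁ x.1 y.1 a.1 b.1 else 0)) *
          (pi₂ x.2 y.2 * (if lam₂ x.2 y.2 a.2 b.2 then p₂ x.2 y.2 a.2 b.2 else 0)) := by
      intro x y a b
      by_cases h1 : lam₁ x.1 y.1 a.1 b.1 <;> by_cases h2 : lam₂ x.2 y.2 a.2 b.2 <;>
        simp [prodRule, prodDensity, h1, h2] <;> ring
    calc (∑ x₁, ∑ y₁, ∑ a₁, ∑ b₁, pi₁ x₁ y₁ * (if lam₁ x₁ y₁ a₁ b₁ then p₁ x₁ y₁ a₁ b₁ else 0)) *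
          (∑ x₂, ∑ y₂, ∑ a₂, ∑ b₂, pi₂ x₂ y₂ * (if lam₂ x₂ y₂ a₂ b₂ then p₂ x₂ y₂ a₂ b₂ else 0))
        = ∑ x : X₁ × X₂, ∑ y : X₁ × X₂, ∑ a : A₁ × A₂, ∑ b : A₁ × A₂,
            (pi₁ x.1 y.1 * (if lam₁ x.1 y.1 a.1 b.1 then p₁ x.1 y.1 a.1 b.1 else 0)) *
            (pi₂ x.2 y.2 * (if lam₂ x.2 y.2 a.2 b.2 then p₂ x.2 y.2 a.2 b.2 else 0)) :=
          (sum4_pair_mul (fun x₁ y₁ a₁ b₁ =>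
              pi₁ x₁ y₁ * (if lam₁ x₁ y₁ a₁ b₁ then p₁ x₁ y₁ a₁ b₁ else 0))
            (fun x₂ y₂ a₂ b₂ =>
              pi₂ x₂ y₂ * (if lam₂ x₂ y₂ a₂ b₂ then p₂ x₂ y₂ a₂ b₂ else 0))).symm
      _ = _ := Finset.sum_congr rfl fun x _ => Finset.sum_congr rfl fun y _ =>
          Finset.sum_congr rfl fun a _ => Finset.sum_congr rfl fun b _ =>
            (hterm x y a b).symm

/-- The synchronous nonsignalling value is supermultiplicative with respect to products of
synchronous games with densities. -/
theorem syncValue_ns_supermultiplicative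
    {X₁ A₁ X₂ A₂ : Type} [Fintype X₁] [Nonempty X₁] [Fintype A₁] [Nonempty A₁]
    [Fintype X₂] [Nonempty X₂] [Fintype A₂] [Nonempty A₂]
    (lam₁ : X₁ → X₁ → A₁ → A₁ → Bool) (lam₂ : X₂ → X₂ → A₂ → A₂ → Bool)
    (hsync₁ : ∀ x a b, a ≠ b → lam₁ x x a b = false)
    (hsync₂ : ∀ x a b, a ≠ b → lam₂ x x a b = false)
    (pi₁ : X₁ → X₁ → ℝ) (pi₂ : X₂ → X₂ → ℝ)
    (hpi₁ : IsDensity pi₁) (hpi₂ : IsDensity pi₂) :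
    syncValue (fun p => IsNonsignallingCorrelation p) lam₁ pi₁ *
      syncValue (fun p => IsNonsignallingCorrelation p) lam₂ pi₂ ≤
    syncValue (fun p => IsNonsignallingCorrelation p) (prodRule lam₁ lam₂)
      (prodDensity pi₁ pi₂) := by
  have hpi : IsDensity (prodDensity pi₁ pi₂) := by
    constructor
    · exact fun x y => mul_nonneg (hpi₁.1 _ _) (hpi₂.1 _ _)
    · rw [show (∑ x : X₁ × X₂, ∑ y : X₁ × X₂, prodDensity pi₁ pi₂ x y)
          = (∑ x₁, ∑ y₁, pi₁ x₁ y₁) * (∑ x₂, ∑ y₂, pi₂ x₂ y₂) from sum2_pair_mul pi₁ pi₂,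
        hpi₁.2, hpi₂.2, one_mul]
  show sSup (valSet lam₁ pi₁) * sSup (valSet lam₂ pi₂) ≤
    sSup (valSet (prodRule lam₁ lam₂) (prodDensity pi₁ pi₂))
  set S₁ := valSet lam₁ pi₁
  set S₂ := valSet lam₂ pi₂
  set S := valSet (prodRule lam₁ lam₂) (prodDensity pi₁ pi₂)
  have hSne : S.Nonempty := valSet_nonempty _ _
  have hSbdd : BddAbove S := valSet_bddAbove _ _ hpi
  have hS0 : 0 ≤ sSup S := by
    obtain ⟨v, hv⟩ := hSne
    exact le_trans (valSet_nonneg _ _ hpi v hv) (le_csSup hSbdd hv)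
  have key : ∀ v₁ ∈ S₁, ∀ v₂ ∈ S₂, v₁ * v₂ ≤ sSup S := fun v₁ h₁ v₂ h₂ =>
    le_csSup hSbdd (mul_mem_valSet_prod lam₁ lam₂ pi₁ pi₂ h₁ h₂)
  have step1 : ∀ v₂ ∈ S₂, sSup S₁ * v₂ ≤ sSup S := by
    intro v₂ h₂
    have hv₂0 : 0 ≤ v₂ := valSet_nonneg _ _ hpi₂ v₂ h₂
    rcases eq_or_lt_of_le hv₂0 with h | h
    · rw [← h, mul_zero]; exact hS0
    · rw [← le_div_iff₀ h]
      refine Real.sSup_le (fun v₁ h₁ => ?_) (div_nonneg hS0 hv₂0)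
      rw [le_div_iff₀ h]
      exact key v₁ h₁ v₂ h₂
  have h10 : 0 ≤ sSup S₁ := by
    obtain ⟨v, hv⟩ := valSet_nonempty lam₁ pi₁
    exact le_trans (valSet_nonneg _ _ hpi₁ v hv)
      (le_csSup (valSet_bddAbove _ _ hpi₁) hv)
  rcases eq_or_lt_of_le h10 with h | h
  · rw [← h, zero_mul]; exact hS0
  · rw [mul_comm, ← le_div_iff₀ h]
    refine Real.sSup_le (fun v₂ h₂ => ?_) (div_nonneg hS0 (le_of_lt h))
    rw [le_div_iff₀ h, mul_comm]
    exact step1 v₂ h₂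
end

section
/- Let (𝔾₁, π₁) and (𝔾₂, π₂) be synchronous games with densities, with 𝔾ᵢ = (Xᵢ, Aᵢ, λᵢ). Then ω_loc^s(𝔾₁, π₁) · ω_loc^s(𝔾₂, π₂) ≤ ω_loc^s(𝔾₁ × 𝔾₂, π₁ × π₂), where (π₁ × π₂)((x₁,x₂),(y₁,y₂)) = π₁(x₁,y₁)·π₂(x₂,y₂), and ω_loc^s denotes the synchronous local value. -/
/-- `p` is a local correlation: a finite convex combination of product correlations
`q_k(a|x) · r_k(b|y)`. -/
def IsLocalCorrelation {X A : Type} [Fintype A] (p : X → X → A → A → ℝ) : Prop :=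
  ∃ (K : Type) (_ : Fintype K) (c : K → ℝ) (q r : K → X → A → ℝ),
    (∀ k, 0 ≤ c k) ∧ (∑ k, c k = 1) ∧
    (∀ k x a, 0 ≤ q k x a) ∧ (∀ k x, ∑ a, q k x a = 1) ∧
    (∀ k y b, 0 ≤ r k y b) ∧ (∀ k y, ∑ b, r k y b = 1) ∧
    (∀ x y a b, p x y a b = ∑ k, c k * (q k x a * r k y b))

/-! ### Auxiliary lemmas -/

lemma prodSumHelper {ι₁ ι₂ : Type} [Fintype ι₁] [Fintype ι₂] (f : ι₁ → ℝ) (g : ι₂ → ℝ) :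
    ∑ a : ι₁ × ι₂, f a.1 * g a.2 = (∑ a, f a) * (∑ a, g a) := by
  rw [Fintype.sum_prod_type, Finset.sum_mul_sum]

lemma sSup_mul_sSup_le {S₁ S₂ S₃ : Set ℝ} (h₁ : S₁.Nonempty) (h₂ : S₂.Nonempty)
    (hn₁ : ∀ v ∈ S₁, 0 ≤ v) (hn₂ : ∀ v ∈ S₂, 0 ≤ v)
    (hb₂ : BddAbove S₂) (hb₃ : BddAbove S₃)
    (hmul : ∀ v₁ ∈ S₁, ∀ v₂ ∈ S₂, v₁ * v₂ ∈ S₃) :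
    sSup S₁ * sSup S₂ ≤ sSup S₃ := by
  obtain ⟨w₁, hw₁⟩ := h₁
  obtain ⟨w₂, hw₂⟩ := h₂
  have hB0 : 0 ≤ sSup S₃ :=
    le_trans (mul_nonneg (hn₁ _ hw₁) (hn₂ _ hw₂)) (le_csSup hb₃ (hmul _ hw₁ _ hw₂))
  have hs₂0 : 0 ≤ sSup S₂ := le_trans (hn₂ _ hw₂) (le_csSup hb₂ hw₂)
  have claim : ∀ v₁ ∈ S₁, v₁ * sSup S₂ ≤ sSup S₃ := by
    intro v₁ hv₁
    rcases eq_or_lt_of_le (hn₁ _ hv₁) with h | h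
    · simpa [← h] using hB0
    · have hle : sSup S₂ ≤ sSup S₃ / v₁ :=
        csSup_le ⟨w₂, hw₂⟩ (fun v₂ hv₂ => (le_div_iff₀ h).mpr
          (by rw [mul_comm]; exact le_csSup hb₃ (hmul _ hv₁ _ hv₂)))
      calc v₁ * sSup S₂ ≤ v₁ * (sSup S₃ / v₁) :=
            mul_le_mul_of_nonneg_left hle h.le
        _ = sSup S₃ := by field_simp
  rcases eq_or_lt_of_le hs₂0 with h | h
  · rw [← h, mul_zero]; exact hB0
  · have hle : sSup S₁ ≤ sSup S₃ / sSup S₂ :=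
      csSup_le ⟨w₁, hw₁⟩ (fun v₁ hv₁ => (le_div_iff₀ h).mpr (claim _ hv₁))
    calc sSup S₁ * sSup S₂ ≤ sSup S₃ / sSup S₂ * sSup S₂ :=
          mul_le_mul_of_nonneg_right hle h.le
      _ = sSup S₃ := by field_simp

/-- The set of achievable synchronous values. -/
def valueSet {X A : Type} [Fintype X] [Fintype A]
    (lam : X → X → A → A → Bool) (pi : X → X → ℝ) : Set ℝ :=
  { v : ℝ | ∃ p, (IsCorrelation p ∧ IsLocalCorrelation p) ∧ IsSynchronousCorrelation p ∧
    v = ∑ x, ∑ y, ∑ a, ∑ b, pi x y * (if lam x y a b then p x y a b else 0) }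

lemma valueSet_nonempty {X A : Type} [Fintype X] [Fintype A] [Nonempty A]
    (lam : X → X → A → A → Bool) (pi : X → X → ℝ) : (valueSet lam pi).Nonempty := by
  classical
  obtain ⟨a₀⟩ := (inferInstance : Nonempty A)
  refine ⟨_, (fun x y a b => (if a = a₀ then (1:ℝ) else 0) * (if b = a₀ then (1:ℝ) else 0)),
    ⟨⟨fun x y a b => by positivity, fun x y => by simp⟩, ?_⟩,
    fun x a b hab => by
      rcases ne_or_eq a a₀ with h | rfl
      · simp [h]
      · simp [Ne.symm hab], rfl⟩
  exact ⟨Unit, inferInstance, fun _ => 1, fun _ _ a => if a = a₀ then 1 else 0,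
    fun _ _ b => if b = a₀ then 1 else 0, fun _ => zero_le_one, by simp,
    fun _ x a => by positivity, fun _ x => by simp,
    fun _ y b => by positivity, fun _ y => by simp,
    fun x y a b => by simp⟩

lemma valueSet_nonneg {X A : Type} [Fintype X] [Fintype A]
    (lam : X → X → A → A → Bool) (pi : X → X → ℝ) (hpi : IsDensity pi) :
    ∀ v ∈ valueSet lam pi, 0 ≤ v := by
  rintro v ⟨p, ⟨hp, _⟩, _, rfl⟩
  refine Finset.sum_nonneg fun x _ => Finset.sum_nonneg fun y _ =>
    Finset.sum_nonneg fun a _ => Finset.sum_nonneg fun b _ =>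
    mul_nonneg (hpi.1 x y) ?_
  split
  · exact hp.1 x y a b
  · exact le_refl 0

lemma valueSet_le_one {X A : Type} [Fintype X] [Fintype A]
    (lam : X → X → A → A → Bool) (pi : X → X → ℝ) (hpi : IsDensity pi) :
    ∀ v ∈ valueSet lam pi, v ≤ 1 := by
  rintro v ⟨p, ⟨hp, _⟩, _, rfl⟩
  calc (∑ x, ∑ y, ∑ a, ∑ b, pi x y * (if lam x y a b then p x y a b else 0))
      ≤ ∑ x, ∑ y, pi x y := by
        refine Finset.sum_le_sum fun x _ => Finset.sum_le_sum fun y _ => ?_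
        have h1 : ∑ a, ∑ b, pi x y * (if lam x y a b then p x y a b else 0)
            = pi x y * ∑ a, ∑ b, (if lam x y a b then p x y a b else 0) := by
          simp [Finset.mul_sum]
        rw [h1]
        have h2 : (∑ a, ∑ b, (if lam x y a b then p x y a b else 0)) ≤ 1 := by
          rw [← hp.2 x y]
          refine Finset.sum_le_sum fun a _ => Finset.sum_le_sum fun b _ => ?_
          split
          · exact le_refl _
          · exact hp.1 x y a b
        calc pi x y * ∑ a, ∑ b, (if lam x y a b then p x y a b else 0)
            ≤ pi x y * 1 := mul_le_mul_of_nonneg_left h2 (hpi.1 x y)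
          _ = pi x y := mul_one _
    _ = 1 := hpi.2

lemma valueSet_bddAbove {X A : Type} [Fintype X] [Fintype A]
    (lam : X → X → A → A → Bool) (pi : X → X → ℝ) (hpi : IsDensity pi) :
    BddAbove (valueSet lam pi) :=
  ⟨1, fun v hv => valueSet_le_one lam pi hpi v hv⟩

lemma ite_and_mul (b₁ b₂ : Bool) (u v : ℝ) :
    (if (b₁ && b₂) = true then u * v else 0)
      = (if b₁ = true then u else 0) * (if b₂ = true then v else 0) := by
  cases b₁ <;> cases b₂ <;> simp

lemma valueSet_mul_mem {X₁ A₁ X₂ A₂ : Type} [Fintype X₁] [Fintype A₁]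
    [Fintype X₂] [Fintype A₂]
    (lam₁ : X₁ → X₁ → A₁ → A₁ → Bool) (lam₂ : X₂ → X₂ → A₂ → A₂ → Bool)
    (pi₁ : X₁ → X₁ → ℝ) (pi₂ : X₂ → X₂ → ℝ)
    {v₁ v₂ : ℝ} (h₁ : v₁ ∈ valueSet lam₁ pi₁) (h₂ : v₂ ∈ valueSet lam₂ pi₂) :
    v₁ * v₂ ∈ valueSet (prodRule lam₁ lam₂) (prodDensity pi₁ pi₂) := by
  obtain ⟨p₁, ⟨⟨hp₁0, hp₁1⟩, K₁, _, c₁, q₁, r₁, hc₁0, hc₁1, hq₁0, hq₁1, hr₁0, hr₁1, hp₁⟩,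
    hs₁, rfl⟩ := h₁
  obtain ⟨p₂, ⟨⟨hp₂0, hp₂1⟩, K₂, _, c₂, q₂, r₂, hc₂0, hc₂1, hq₂0, hq₂1, hr₂0, hr₂1, hp₂⟩,
    hs₂, rfl⟩ := h₂
  refine ⟨fun x y a b => p₁ x.1 y.1 a.1 b.1 * p₂ x.2 y.2 a.2 b.2, ⟨⟨?_, ?_⟩, ?_⟩, ?_, ?_⟩
  · exact fun x y a b => mul_nonneg (hp₁0 _ _ _ _) (hp₂0 _ _ _ _)
  · intro x y
    have : ∀ a : A₁ × A₂, ∑ b : A₁ × A₂, p₁ x.1 y.1 a.1 b.1 * p₂ x.2 y.2 a.2 b.2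
        = (∑ b₁, p₁ x.1 y.1 a.1 b₁) * (∑ b₂, p₂ x.2 y.2 a.2 b₂) := fun a =>
      prodSumHelper _ _
    simp_rw [this]
    rw [prodSumHelper (fun a₁ => ∑ b₁, p₁ x.1 y.1 a₁ b₁)
      (fun a₂ => ∑ b₂, p₂ x.2 y.2 a₂ b₂), hp₁1, hp₂1, mul_one]
  · refine ⟨K₁ × K₂, inferInstance, fun k => c₁ k.1 * c₂ k.2,
      fun k x a => q₁ k.1 x.1 a.1 * q₂ k.2 x.2 a.2,
      fun k y b => r₁ k.1 y.1 b.1 * r₂ k.2 y.2 b.2,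
      fun k => mul_nonneg (hc₁0 _) (hc₂0 _), by rw [prodSumHelper, hc₁1, hc₂1, mul_one],
      fun k x a => mul_nonneg (hq₁0 _ _ _) (hq₂0 _ _ _),
      fun k x => by rw [prodSumHelper, hq₁1, hq₂1, mul_one],
      fun k y b => mul_nonneg (hr₁0 _ _ _) (hr₂0 _ _ _),
      fun k y => by rw [prodSumHelper, hr₁1, hr₂1, mul_one], ?_⟩
    intro x y a b
    show p₁ x.1 y.1 a.1 b.1 * p₂ x.2 y.2 a.2 b.2 = _
    rw [hp₁, hp₂, Finset.sum_mul_sum, Fintype.sum_prod_type]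
    refine Finset.sum_congr rfl fun i _ => Finset.sum_congr rfl fun j _ => ?_
    show c₁ i * (q₁ i x.1 a.1 * r₁ i y.1 b.1) * (c₂ j * (q₂ j x.2 a.2 * r₂ j y.2 b.2))
      = c₁ i * c₂ j * (q₁ i x.1 a.1 * q₂ j x.2 a.2 * (r₁ i y.1 b.1 * r₂ j y.2 b.2))
    ring
  · rintro x a b hab
    show p₁ x.1 x.1 a.1 b.1 * p₂ x.2 x.2 a.2 b.2 = 0
    rcases ne_or_eq a.1 b.1 with h | h
    · rw [hs₁ _ _ _ h, zero_mul]
    · have h2 : a.2 ≠ b.2 := fun h2 => hab (Prod.ext h h2)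
      rw [hs₂ _ _ _ h2, mul_zero]
  · have key : ∀ (x y : X₁ × X₂) (a b : A₁ × A₂),
        prodDensity pi₁ pi₂ x y *
          (if prodRule lam₁ lam₂ x y a b then p₁ x.1 y.1 a.1 b.1 * p₂ x.2 y.2 a.2 b.2 else 0)
        = (pi₁ x.1 y.1 * (if lam₁ x.1 y.1 a.1 b.1 then p₁ x.1 y.1 a.1 b.1 else 0)) *
          (pi₂ x.2 y.2 * (if lam₂ x.2 y.2 a.2 b.2 then p₂ x.2 y.2 a.2 b.2 else 0)) := by
      intro x y a b
      rw [prodRule, prodDensity, ite_and_mul]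
      ring
    simp_rw [key]
    have hAB : ∀ (x y : X₁ × X₂) (a : A₁ × A₂),
        ∑ b : A₁ × A₂, (pi₁ x.1 y.1 * (if lam₁ x.1 y.1 a.1 b.1 then p₁ x.1 y.1 a.1 b.1 else 0)) *
          (pi₂ x.2 y.2 * (if lam₂ x.2 y.2 a.2 b.2 then p₂ x.2 y.2 a.2 b.2 else 0))
        = (∑ b₁, pi₁ x.1 y.1 * (if lam₁ x.1 y.1 a.1 b₁ then p₁ x.1 y.1 a.1 b₁ else 0)) *
          (∑ b₂, pi₂ x.2 y.2 * (if lam₂ x.2 y.2 a.2 b₂ then p₂ x.2 y.2 a.2 b₂ else 0)) :=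
      fun x y a => prodSumHelper
        (fun b₁ => pi₁ x.1 y.1 * (if lam₁ x.1 y.1 a.1 b₁ then p₁ x.1 y.1 a.1 b₁ else 0))
        (fun b₂ => pi₂ x.2 y.2 * (if lam₂ x.2 y.2 a.2 b₂ then p₂ x.2 y.2 a.2 b₂ else 0))
    simp_rw [hAB]
    have hA : ∀ (x y : X₁ × X₂),
        ∑ a : A₁ × A₂,
          (∑ b₁, pi₁ x.1 y.1 * (if lam₁ x.1 y.1 a.1 b₁ then p₁ x.1 y.1 a.1 b₁ else 0)) *
          (∑ b₂, pi₂ x.2 y.2 * (if lam₂ x.2 y.2 a.2 b₂ then p₂ x.2 y.2 a.2 b₂ else 0))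
        = (∑ a₁, ∑ b₁, pi₁ x.1 y.1 * (if lam₁ x.1 y.1 a₁ b₁ then p₁ x.1 y.1 a₁ b₁ else 0)) *
          (∑ a₂, ∑ b₂, pi₂ x.2 y.2 * (if lam₂ x.2 y.2 a₂ b₂ then p₂ x.2 y.2 a₂ b₂ else 0)) :=
      fun x y => prodSumHelper
        (fun a₁ => ∑ b₁, pi₁ x.1 y.1 * (if lam₁ x.1 y.1 a₁ b₁ then p₁ x.1 y.1 a₁ b₁ else 0))
        (fun a₂ => ∑ b₂, pi₂ x.2 y.2 * (if lam₂ x.2 y.2 a₂ b₂ then p₂ x.2 y.2 a₂ b₂ else 0))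
    simp_rw [hA]
    have hY : ∀ (x : X₁ × X₂),
        ∑ y : X₁ × X₂,
          (∑ a₁, ∑ b₁, pi₁ x.1 y.1 * (if lam₁ x.1 y.1 a₁ b₁ then p₁ x.1 y.1 a₁ b₁ else 0)) *
          (∑ a₂, ∑ b₂, pi₂ x.2 y.2 * (if lam₂ x.2 y.2 a₂ b₂ then p₂ x.2 y.2 a₂ b₂ else 0))
        = (∑ y₁, ∑ a₁, ∑ b₁, pi₁ x.1 y₁ * (if lam₁ x.1 y₁ a₁ b₁ then p₁ x.1 y₁ a₁ b₁ else 0)) *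
          (∑ y₂, ∑ a₂, ∑ b₂, pi₂ x.2 y₂ * (if lam₂ x.2 y₂ a₂ b₂ then p₂ x.2 y₂ a₂ b₂ else 0)) :=
      fun x => prodSumHelper
        (fun y₁ => ∑ a₁, ∑ b₁, pi₁ x.1 y₁ * (if lam₁ x.1 y₁ a₁ b₁ then p₁ x.1 y₁ a₁ b₁ else 0))
        (fun y₂ => ∑ a₂, ∑ b₂, pi₂ x.2 y₂ * (if lam₂ x.2 y₂ a₂ b₂ then p₂ x.2 y₂ a₂ b₂ else 0))
    simp_rw [hY]
    exact (prodSumHelper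
      (fun x₁ => ∑ y₁, ∑ a₁, ∑ b₁, pi₁ x₁ y₁ * (if lam₁ x₁ y₁ a₁ b₁ then p₁ x₁ y₁ a₁ b₁ else 0))
      (fun x₂ => ∑ y₂, ∑ a₂, ∑ b₂, pi₂ x₂ y₂ * (if lam₂ x₂ y₂ a₂ b₂ then p₂ x₂ y₂ a₂ b₂ else 0))).symm

/-! ### Main theorem -/

/-- The synchronous local value is supermultiplicative with respect to products of synchronous
games with densities. -/
theorem syncValue_loc_supermultiplicative
    {X₁ A₁ X₂ A₂ : Type} [Fintype X₁] [Nonempty X₁] [Fintype A₁] [Nonempty A₁]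
    [Fintype X₂] [Nonempty X₂] [Fintype A₂] [Nonempty A₂]
    (lam₁ : X₁ → X₁ → A₁ → A₁ → Bool) (lam₂ : X₂ → X₂ → A₂ → A₂ → Bool)
    (hsync₁ : ∀ x a b, a ≠ b → lam₁ x x a b = false)
    (hsync₂ : ∀ x a b, a ≠ b → lam₂ x x a b = false)
    (pi₁ : X₁ → X₁ → ℝ) (pi₂ : X₂ → X₂ → ℝ)
    (hpi₁ : IsDensity pi₁) (hpi₂ : IsDensity pi₂) :
    syncValue (fun p => IsCorrelation p ∧ IsLocalCorrelation p) lam₁ pi₁ *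
      syncValue (fun p => IsCorrelation p ∧ IsLocalCorrelation p) lam₂ pi₂ ≤
    syncValue (fun p => IsCorrelation p ∧ IsLocalCorrelation p)
      (prodRule lam₁ lam₂) (prodDensity pi₁ pi₂) := by
  have h1 : syncValue (fun p => IsCorrelation p ∧ IsLocalCorrelation p) lam₁ pi₁
      = sSup (valueSet lam₁ pi₁) := rfl
  have h2 : syncValue (fun p => IsCorrelation p ∧ IsLocalCorrelation p) lam₂ pi₂
      = sSup (valueSet lam₂ pi₂) := rfl
  have h3 : syncValue (fun p => IsCorrelation p ∧ IsLocalCorrelation p)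
      (prodRule lam₁ lam₂) (prodDensity pi₁ pi₂)
      = sSup (valueSet (prodRule lam₁ lam₂) (prodDensity pi₁ pi₂)) := rfl
  rw [h1, h2, h3]
  have hpi₃ : IsDensity (prodDensity pi₁ pi₂) := by
    constructor
    · exact fun x y => mul_nonneg (hpi₁.1 _ _) (hpi₂.1 _ _)
    · have : ∀ x : X₁ × X₂, ∑ y : X₁ × X₂, prodDensity pi₁ pi₂ x y
          = (∑ y₁, pi₁ x.1 y₁) * (∑ y₂, pi₂ x.2 y₂) := fun x => prodSumHelper _ _
      simp_rw [this]
      rw [prodSumHelper (fun x₁ => ∑ y₁, pi₁ x₁ y₁) (fun x₂ => ∑ y₂, pi₂ x₂ y₂),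
        hpi₁.2, hpi₂.2, mul_one]
  exact sSup_mul_sSup_le (valueSet_nonempty _ _) (valueSet_nonempty _ _)
    (valueSet_nonneg _ _ hpi₁) (valueSet_nonneg _ _ hpi₂)
    (valueSet_bddAbove _ _ hpi₂) (valueSet_bddAbove _ _ hpi₃)
    (fun v₁ hv₁ v₂ hv₂ => valueSet_mul_mem lam₁ lam₂ pi₁ pi₂ hv₁ hv₂)
end

section
/- Let 𝔾 = (X, A, λ) be the synchronous game with X = {1,2,3}, A = {1,2}, and λ(x,y,a,b) = 1 if and only if (a,b) ∈ E_{x,y}, where E_{1,2} = E_{2,1} = E_{2,3} = E_{3,2} = {(1,2)}, E_{1,3} = E_{3,1} = {(2,1)}, and E_{1,1} = E_{2,2} = E_{3,3} = {(1,1),(2,2)}, and let π be the uniform probability distribution on X × X (π(x,y) = 1/9 for all x,y). Then ω_loc^s(𝔾, π) = 5/9. -/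
/-- The rule function of the game of Example 4.4 (questions `{1,2,3}` encoded as
`Fin 3 = {0,1,2}`, answers `{1,2}` encoded as `Fin 2 = {0,1}`):
`E_{1,2} = E_{2,1} = E_{2,3} = E_{3,2} = {(1,2)}`, `E_{1,3} = E_{3,1} = {(2,1)}`, and
`E_{1,1} = E_{2,2} = E_{3,3} = {(1,1),(2,2)}`. -/
def lamEx2 (x y : Fin 3) (a b : Fin 2) : Bool :=
  decide ((x = y ∧ a = b) ∨
    (((x = 0 ∧ y = 1) ∨ (x = 1 ∧ y = 0) ∨ (x = 1 ∧ y = 2) ∨ (x = 2 ∧ y = 1)) ∧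
      a = 0 ∧ b = 1) ∨
    (((x = 0 ∧ y = 2) ∨ (x = 2 ∧ y = 0)) ∧ a = 1 ∧ b = 0))

lemma exDet (a b c d : ℝ) (ha : 0 ≤ a) (hb : 0 ≤ b) (hc : 0 ≤ c) (hd : 0 ≤ d)
    (h1 : a + b = 1) (h2 : c + d = 1) (h3 : a * d = 0) (h4 : b * c = 0) :
    (a = 1 ∧ b = 0 ∧ c = 1 ∧ d = 0) ∨ (a = 0 ∧ b = 1 ∧ c = 0 ∧ d = 1) := by
  have hac : a = c := by nlinarith
  have : a * (1 - a) = 0 := by nlinarith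
  rcases mul_eq_zero.mp this with h | h
  · right; exact ⟨h, by linarith, by linarith [hac], by linarith [hac]⟩
  · left; exact ⟨by linarith, by linarith, by linarith [hac], by linarith [hac]⟩

lemma exKey (q r : Fin 3 → Fin 2 → ℝ)
    (hq0 : ∀ x a, 0 ≤ q x a) (hq1 : ∀ x, ∑ a, q x a = 1)
    (hr0 : ∀ y b, 0 ≤ r y b) (hr1 : ∀ y, ∑ b, r y b = 1)
    (hsync : ∀ x a b, a ≠ b → q x a * r x b = 0) :
    ∑ x, ∑ y, ∑ a, ∑ b, (1/9:ℝ) * (if lamEx2 x y a b then q x a * r y b else 0) ≤ 5/9 := by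
  have hx : ∀ x, (q x 0 = 1 ∧ q x 1 = 0 ∧ r x 0 = 1 ∧ r x 1 = 0) ∨
      (q x 0 = 0 ∧ q x 1 = 1 ∧ r x 0 = 0 ∧ r x 1 = 1) := by
    intro x
    refine exDet _ _ _ _ (hq0 x 0) (hq0 x 1) (hr0 x 0) (hr0 x 1) ?_ ?_
      (hsync x 0 1 (by decide)) (hsync x 1 0 (by decide))
    · simpa [Fin.sum_univ_two] using hq1 x
    · simpa [Fin.sum_univ_two] using hr1 x
  obtain ⟨a0,b0,c0,d0⟩ | ⟨a0,b0,c0,d0⟩ := hx 0 <;>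
  obtain ⟨a1,b1,c1,d1⟩ | ⟨a1,b1,c1,d1⟩ := hx 1 <;>
  obtain ⟨a2,b2,c2,d2⟩ | ⟨a2,b2,c2,d2⟩ := hx 2 <;>
  · simp only [Fin.sum_univ_three, Fin.sum_univ_two, lamEx2]
    norm_num [a0,b0,c0,d0,a1,b1,c1,d1,a2,b2,c2,d2, Fin.ext_iff]

/-- witness deterministic strategy: answers `0,1,0` on questions `0,1,2`. -/
noncomputable def exQW : Fin 3 → Fin 2 → ℝ := fun x a => if (a = 1 ↔ x = 1) then 1 else 0

lemma exQW_nonneg : ∀ x a, 0 ≤ exQW x a := by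
  intro x a; unfold exQW; split_ifs <;> norm_num

lemma exQW_sum : ∀ x, ∑ a, exQW x a = 1 := by
  intro x; fin_cases x <;>
    · simp only [exQW, Fin.sum_univ_two]; norm_num [Fin.ext_iff]

lemma exQW_sync : ∀ x (a b : Fin 2), a ≠ b → exQW x a * exQW x b = 0 := by
  intro x a b hab
  unfold exQW
  split_ifs with h1 h2
  · exfalso; apply hab; fin_cases a <;> fin_cases b <;> simp_all
  · ring
  · ring
  · ring

lemma exMem : ((5:ℝ)/9) ∈ { v : ℝ | ∃ p, (IsCorrelation p ∧ IsLocalCorrelation p) ∧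
    IsSynchronousCorrelation p ∧
    v = ∑ x, ∑ y, ∑ a, ∑ b, (fun (_ _ : Fin 3) => (1:ℝ)/9) x y *
      (if lamEx2 x y a b then p x y a b else 0) } := by
  refine ⟨fun x y a b => exQW x a * exQW y b, ⟨⟨?_, ?_⟩, ?_⟩, ?_, ?_⟩
  · intro x y a b; exact mul_nonneg (exQW_nonneg x a) (exQW_nonneg y b)
  · intro x y
    rw [← Finset.sum_mul_sum, exQW_sum, exQW_sum, one_mul]
  · exact ⟨Unit, inferInstance, fun _ => 1, fun _ => exQW, fun _ => exQW,
      fun _ => by norm_num, by simp, fun _ => exQW_nonneg, fun _ => exQW_sum,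
      fun _ => exQW_nonneg, fun _ => exQW_sum, fun x y a b => by simp⟩
  · intro x a b hab; exact exQW_sync x a b hab
  · simp only [Fin.sum_univ_three, Fin.sum_univ_two, lamEx2, exQW]
    norm_num [Fin.ext_iff]

lemma exBound : ∀ v ∈ { v : ℝ | ∃ p, (IsCorrelation p ∧ IsLocalCorrelation p) ∧
    IsSynchronousCorrelation p ∧
    v = ∑ x, ∑ y, ∑ a, ∑ b, (fun (_ _ : Fin 3) => (1:ℝ)/9) x y *
      (if lamEx2 x y a b then p x y a b else 0) }, v ≤ 5/9 := by
  rintro v ⟨p, ⟨⟨hpos, hsum⟩, K, instK, c, q, r, hc0, hc1, hq0, hq1, hr0, hr1, hp⟩, hsyncp, hv⟩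
  have hterm : ∀ k, 0 < c k → ∀ x a b, a ≠ b → q k x a * r k x b = 0 := by
    intro k hk x a b hab
    have h0 : ∑ k, c k * (q k x a * r k x b) = 0 := by
      rw [← hp x x a b]; exact hsyncp x a b hab
    have h1 := (Finset.sum_eq_zero_iff_of_nonneg (fun k _ =>
      mul_nonneg (hc0 k) (mul_nonneg (hq0 k x a) (hr0 k x b)))).mp h0 k (Finset.mem_univ k)
    rcases mul_eq_zero.mp h1 with h | h
    · exact absurd h (ne_of_gt hk)
    · exact h
  have hswap : ∀ x y a b, (1/9:ℝ) * (if lamEx2 x y a b then p x y a b else 0)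
      = ∑ k, c k * ((1/9:ℝ) * (if lamEx2 x y a b then q k x a * r k y b else 0)) := by
    intro x y a b
    split_ifs with h
    · rw [hp, Finset.mul_sum]; exact Finset.sum_congr rfl fun k _ => by ring
    · simp
  have hv2 : v = ∑ k, c k *
      (∑ x, ∑ y, ∑ a, ∑ b, (1/9:ℝ) * (if lamEx2 x y a b then q k x a * r k y b else 0)) := by
    rw [hv]
    simp only []
    calc (∑ x, ∑ y, ∑ a, ∑ b, (1/9:ℝ) * (if lamEx2 x y a b then p x y a b else 0))
        = ∑ x, ∑ y, ∑ a, ∑ b, ∑ k, c k *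
            ((1/9:ℝ) * (if lamEx2 x y a b then q k x a * r k y b else 0)) := by
          exact Finset.sum_congr rfl fun x _ => Finset.sum_congr rfl fun y _ =>
            Finset.sum_congr rfl fun a _ => Finset.sum_congr rfl fun b _ => hswap x y a b
      _ = ∑ x, ∑ y, ∑ a, ∑ k, ∑ b, c k *
            ((1/9:ℝ) * (if lamEx2 x y a b then q k x a * r k y b else 0)) := by
          exact Finset.sum_congr rfl fun x _ => Finset.sum_congr rfl fun y _ =>
            Finset.sum_congr rfl fun a _ => Finset.sum_comm
      _ = ∑ x, ∑ y, ∑ k, ∑ a, ∑ b, _ := by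
          exact Finset.sum_congr rfl fun x _ => Finset.sum_congr rfl fun y _ =>
            Finset.sum_comm
      _ = ∑ x, ∑ k, ∑ y, ∑ a, ∑ b, _ := by
          exact Finset.sum_congr rfl fun x _ => Finset.sum_comm
      _ = ∑ k, ∑ x, ∑ y, ∑ a, ∑ b, c k *
            ((1/9:ℝ) * (if lamEx2 x y a b then q k x a * r k y b else 0)) := Finset.sum_comm
      _ = ∑ k, c k * (∑ x, ∑ y, ∑ a, ∑ b,
            (1/9:ℝ) * (if lamEx2 x y a b then q k x a * r k y b else 0)) := by
          simp_rw [Finset.mul_sum]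
  rw [hv2]
  calc ∑ k, c k * (∑ x, ∑ y, ∑ a, ∑ b,
        (1/9:ℝ) * (if lamEx2 x y a b then q k x a * r k y b else 0))
      ≤ ∑ k, c k * (5/9) := by
        refine Finset.sum_le_sum fun k _ => ?_
        rcases eq_or_lt_of_le (hc0 k) with h | h
        · rw [← h]; simp
        · exact mul_le_mul_of_nonneg_left
            (exKey (q k) (r k) (hq0 k) (hq1 k) (hr0 k) (hr1 k) (hterm k h)) h.le
    _ = 5/9 := by rw [← Finset.sum_mul, hc1, one_mul]


/-- For the game `𝔾` of Example 4.4 with uniform input distribution, the synchronous local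
value is `5/9`. -/
theorem ex2_syncValue_loc :
    syncValue (fun p => IsCorrelation p ∧ IsLocalCorrelation p) lamEx2
      (fun _ _ => (1 : ℝ)/9) = 5/9 := by
  unfold syncValue
  apply le_antisymm
  · exact csSup_le ⟨5/9, exMem⟩ exBound
  · exact le_csSup ⟨5/9, fun v hv => exBound v hv⟩ exMem
end

section
/- Let 𝒜 be a unital C*-algebra, let τ : 𝒜 → ℂ be a tracial state (a linear functional with τ(1) = 1, τ(a*a) ≥ 0 for all a ∈ 𝒜, and τ(ab) = τ(ba) for all a, b ∈ 𝒜), and let p, q, r ∈ 𝒜 be projections (p* = p = p², and similarly for q and r). Then the complex number τ(p) + τ(q) + τ(r) − τ(pq) − τ(qr) − τ(rp) is real and satisfies τ(p) + τ(q) + τ(r) − τ(pq) − τ(qr) − τ(rp) ≤ 9/8. -/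
open scoped ComplexOrder

/-- If `τ` is a tracial state on a unital C*-algebra `𝒜` and `p`, `q`, `r` are projections in
`𝒜`, then `τ(p) + τ(q) + τ(r) − τ(pq) − τ(qr) − τ(rp)` is a real number and is at most `9/8`. -/
theorem tracialState_three_projections_le
    {𝒜 : Type} [CStarAlgebra 𝒜]
    (τ : 𝒜 →ₗ[ℂ] ℂ)
    (hτ1 : τ 1 = 1)
    (hτpos : ∀ a : 𝒜, 0 ≤ τ (star a * a))
    (hτtr : ∀ a b : 𝒜, τ (a * b) = τ (b * a))
    (p q r : 𝒜)
    (hp : star p = p ∧ p * p = p)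
    (hq : star q = q ∧ q * q = q)
    (hr : star r = r ∧ r * r = r) :
    (τ p + τ q + τ r - τ (p * q) - τ (q * r) - τ (r * p)).im = 0 ∧
    (τ p + τ q + τ r - τ (p * q) - τ (q * r) - τ (r * p)).re ≤ 9 / 8 := by
  obtain ⟨hp1, hp2⟩ := hp
  obtain ⟨hq1, hq2⟩ := hq
  obtain ⟨hr1, hr2⟩ := hr
  -- single projections have nonnegative trace
  have hP : 0 ≤ τ p := by have h := hτpos p; rwa [hp1, hp2] at h
  have hQ : 0 ≤ τ q := by have h := hτpos q; rwa [hq1, hq2] at h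
  have hR : 0 ≤ τ r := by have h := hτpos r; rwa [hr1, hr2] at h
  -- products of projections have nonnegative trace
  have hprod : ∀ x y : 𝒜, star x = x → x * x = x → star y = y → y * y = y →
      0 ≤ τ (x * y) := by
    intro x y hx1 hx2 hy1 hy2
    have h := hτpos (x * y)
    have e1 : star (x * y) * (x * y) = y * (x * y) := by
      rw [star_mul, hx1, hy1, mul_assoc, ← mul_assoc x x y, hx2]
    rw [e1, hτtr y (x * y), mul_assoc, hy2] at h
    exact h
  have hPQ : 0 ≤ τ (p * q) := hprod p q hp1 hp2 hq1 hq2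
  have hQR : 0 ≤ τ (q * r) := hprod q r hq1 hq2 hr1 hr2
  have hRP : 0 ≤ τ (r * p) := hprod r p hr1 hr2 hp1 hp2
  -- the key positivity
  set a : 𝒜 := p + q + r - (3/2 : ℂ) • 1 with ha
  have hsa : star a = a := by
    simp [ha, star_sub, star_add, hp1, hq1, hr1, star_smul]
  have key : τ (star a * a)
      = 2 * (τ (p * q) + τ (q * r) + τ (r * p)) - 2 * (τ p + τ q + τ r) + 9 / 4 := by
    rw [hsa]
    have expand : a * a
        = p * p + q * q + r * r + (p * q + q * p) + (q * r + r * q) + (r * p + p * r)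
          - (3 : ℂ) • (p + q + r) + (9/4 : ℂ) • 1 := by
      simp only [ha]
      simp only [mul_sub, sub_mul, add_mul, mul_add, smul_mul_assoc, mul_smul_comm,
        one_mul, mul_one, smul_smul, smul_add]
      module
    rw [expand, hp2, hq2, hr2]
    simp only [map_add, map_sub, map_smul, hτ1, smul_eq_mul]
    rw [hτtr q p, hτtr r q, hτtr p r]
    ring
  have hpos := hτpos a
  rw [key] at hpos
  -- extract real/imaginary information
  rw [Complex.le_def] at hP hQ hR hPQ hQR hRP hpos
  simp only [Complex.zero_re, Complex.zero_im] at hP hQ hR hPQ hQR hRP hpos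
  constructor
  · simp [Complex.sub_im, Complex.add_im, ← hP.2, ← hQ.2, ← hR.2, ← hPQ.2, ← hQR.2, ← hRP.2]
  · obtain ⟨hre, -⟩ := hpos
    have : (2 * (τ (p * q) + τ (q * r) + τ (r * p)) - 2 * (τ p + τ q + τ r) + 9 / 4).re
        = 2 * ((τ (p * q)).re + (τ (q * r)).re + (τ (r * p)).re)
          - 2 * ((τ p).re + (τ q).re + (τ r).re) + 9 / 4 := by
      simp [Complex.add_re, Complex.sub_re, Complex.mul_re]
    rw [this] at hre
    simp only [Complex.sub_re, Complex.add_re]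
    linarith
end

section
/- For every n ≥ 1 and all orthogonal projections p, q, r ∈ M_n(ℂ), one has (1/n)·tr(p + q + r − pq − qr − rp) ≤ 9/8 (the trace on the left-hand side is a real number). Moreover, there exist orthogonal projections p, q, r ∈ M₂(ℂ) with p + q + r = (3/2)·I₂ and (1/2)·tr(p + q + r − pq − qr − rp) = 9/8; for example p = [[1,0],[0,0]], q = [[1/4, √3/4],[√3/4, 3/4]], r = [[1/4, −√3/4],[−√3/4, 3/4]]. -/
open Matrix

lemma aux_trace_conjTranspose_mul_self {n : ℕ} (M : Matrix (Fin n) (Fin n) ℂ) :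
    (Mᴴ * M).trace = ((∑ j, ∑ i, Complex.normSq (M i j) : ℝ) : ℂ) := by
  simp [Matrix.trace, Matrix.mul_apply, Matrix.conjTranspose_apply, Matrix.diag,
    Complex.normSq_eq_conj_mul_self]

/-- For orthogonal projections `p`, `q`, `r` in `M_n(ℂ)` the normalized trace of
`p + q + r − pq − qr − rp` is a real number which is at most `9/8`; moreover the bound `9/8` is
attained in dimension `2`, e.g. by `p = [[1,0],[0,0]]`,
`q = [[1/4, √3/4],[√3/4, 3/4]]`, `r = [[1/4, −√3/4],[−√3/4, 3/4]]`, which satisfy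
`p + q + r = (3/2)·I₂`. -/
theorem three_projections_normalized_trace_le_and_attained :
    (∀ (n : ℕ), 1 ≤ n → ∀ p q r : Matrix (Fin n) (Fin n) ℂ,
      (p.conjTranspose = p ∧ p * p = p) →
      (q.conjTranspose = q ∧ q * q = q) →
      (r.conjTranspose = r ∧ r * r = r) →
      ((p + q + r - p * q - q * r - r * p).trace.im = 0 ∧
        (p + q + r - p * q - q * r - r * p).trace.re / (n : ℝ) ≤ 9 / 8)) ∧
    (∃ p q r : Matrix (Fin 2) (Fin 2) ℂ,
      (p.conjTranspose = p ∧ p * p = p) ∧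
      (q.conjTranspose = q ∧ q * q = q) ∧
      (r.conjTranspose = r ∧ r * r = r) ∧
      p + q + r = ((3 : ℂ) / 2) • (1 : Matrix (Fin 2) (Fin 2) ℂ) ∧
      p = !![1, 0; 0, 0] ∧
      q = !![1/4, (Real.sqrt 3 : ℂ)/4; (Real.sqrt 3 : ℂ)/4, 3/4] ∧
      r = !![1/4, -(Real.sqrt 3 : ℂ)/4; -(Real.sqrt 3 : ℂ)/4, 3/4] ∧
      ((1 : ℂ) / 2) * (p + q + r - p * q - q * r - r * p).trace = 9 / 8) := by
  constructor
  · intro n hn p q r hp hq hr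
    set A : Matrix (Fin n) (Fin n) ℂ := p + q + r - ((3 : ℂ)/2) • 1 with hA
    have hAh : Aᴴ = A := by
      simp [hA, Matrix.conjTranspose_add, Matrix.conjTranspose_sub, Matrix.conjTranspose_smul,
        hp.1, hq.1, hr.1]
    have key : (p + q + r - p * q - q * r - r * p).trace
        = (9/8 : ℂ) * n - (1/2 : ℂ) * (Aᴴ * A).trace := by
      rw [hAh]
      have hAA : A * A = p + q + r + p*q + q*p + q*r + r*q + r*p + p*r
          - (3:ℂ) • (p + q + r) + ((9:ℂ)/4) • 1 := by
        simp only [hA, sub_mul, mul_sub, add_mul, mul_add, smul_mul_assoc, mul_smul_comm,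
          one_mul, mul_one, hp.2, hq.2, hr.2, smul_smul]
        module
      rw [hAA]
      simp only [Matrix.trace_sub, Matrix.trace_add, Matrix.trace_smul, Matrix.trace_one,
        smul_eq_mul, Fintype.card_fin]
      rw [Matrix.trace_mul_comm q p, Matrix.trace_mul_comm r q, Matrix.trace_mul_comm p r]
      push_cast
      ring
    constructor
    · rw [key, aux_trace_conjTranspose_mul_self]
      simp
    · rw [key, aux_trace_conjTranspose_mul_self]
      rw [div_le_iff₀ (by exact_mod_cast Nat.pos_of_ne_zero (by omega))]
      have hnn : (0:ℝ) ≤ ∑ j, ∑ i, Complex.normSq (A i j) :=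
        Finset.sum_nonneg fun j _ => Finset.sum_nonneg fun i _ => Complex.normSq_nonneg _
      simp only [Complex.sub_re, Complex.mul_re, Complex.ofReal_re, Complex.ofReal_im]
      push_cast
      norm_num
      nlinarith
  · have h3 : (Real.sqrt 3 : ℂ) * (Real.sqrt 3 : ℂ) = 3 := by
      rw [← Complex.ofReal_mul, Real.mul_self_sqrt (by norm_num)]
      norm_num
    refine ⟨!![1, 0; 0, 0], !![1/4, (Real.sqrt 3 : ℂ)/4; (Real.sqrt 3 : ℂ)/4, 3/4],
      !![1/4, -(Real.sqrt 3 : ℂ)/4; -(Real.sqrt 3 : ℂ)/4, 3/4], ⟨?_, ?_⟩, ⟨?_, ?_⟩, ⟨?_, ?_⟩,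
      ?_, rfl, rfl, rfl, ?_⟩
    · ext i j; fin_cases i <;> fin_cases j <;>
        simp [Matrix.conjTranspose_apply, Complex.conj_ofReal]
    · ext i j; fin_cases i <;> fin_cases j <;>
        simp [Matrix.mul_apply, Fin.sum_univ_two]
    · ext i j; fin_cases i <;> fin_cases j <;>
        simp [Matrix.conjTranspose_apply, Complex.conj_ofReal]
    · ext i j; fin_cases i <;> fin_cases j <;>
        simp [Matrix.mul_apply, Fin.sum_univ_two] <;>
        first | linear_combination h3/16 | ring
    · ext i j; fin_cases i <;> fin_cases j <;>
        simp [Matrix.conjTranspose_apply, Complex.conj_ofReal]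
    · ext i j; fin_cases i <;> fin_cases j <;>
        simp [Matrix.mul_apply, Fin.sum_univ_two] <;>
        first | linear_combination h3/16 | ring
    · ext i j; fin_cases i <;> fin_cases j <;> simp [Matrix.one_apply] <;> ring
    · simp [Matrix.trace_fin_two, Matrix.mul_apply, Fin.sum_univ_two]
      linear_combination h3/16
end
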